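/- arXiv:math/9808047 — 5 statements merged into one kernel-verified Lean document; each statement's English description precedes it below -/
import Mathlib

section
/- Let n be a natural number and let q ∈ ℂ with q ≠ 0 and q^i ≠ 1 for all integers 1 ≤ i ≤ n. Then for every t ∈ ℂ: (t;q)_n = Σ_{j=0}^{n} [(q^{−n};q)_j / (q;q)_j] · q^{jn} · t^j. -/
/-!
Writing `c n j` for the coefficient of `t ^ j` in `(t;q)_n`, the factorization
`(t;q)_{n+1} = (t;q)_n (1 - q^n t)` gives the `q`-Pascal rule
`c (n+1) (j+1) = c n (j+1) - q^n c n j`, and one checks that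
`∏_{i<j} (q^n - q^i) / (q;q)_j` satisfies the same rule with the same boundary values.
Since `(q^{-n};q)_j q^{jn} = ∏_{i<j} (q^n - q^i)`, this is the stated coefficient.
-/

open Finset

variable {K : Type*} [Field K]

def qPochhammer (a q : K) (m : ℕ) : K :=
  ∏ i ∈ range m, (1 - a * q ^ i)

theorem qPochhammer_zero (a q : K) : qPochhammer a q 0 = 1 :=
  prod_range_zero _

theorem qPochhammer_succ (a q : K) (m : ℕ) :
    qPochhammer a q (m + 1) = qPochhammer a q m * (1 - a * q ^ m) :=
  prod_range_succ _ _

theorem qPochhammer_self_ne_zero {q : K} {j : ℕ}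
    (hq : ∀ i : ℕ, 1 ≤ i → i ≤ j → q ^ i ≠ 1) : qPochhammer q q j ≠ 0 := by
  refine prod_ne_zero_iff.2 fun i hi h => hq (i + 1) (by omega) (by simp at hi; omega) ?_
  rw [pow_succ']
  exact (sub_eq_zero.1 h).symm

theorem prod_pow_sub_pow_succ_succ (q : K) (n j : ℕ) :
    ∏ i ∈ range (j + 1), (q ^ (n + 1) - q ^ i) =
      (q ^ (n + 1) - 1) * q ^ j * ∏ i ∈ range j, (q ^ n - q ^ i) := by
  have h : ∀ i, q ^ (n + 1) - q ^ (i + 1) = q * (q ^ n - q ^ i) := fun i => by ring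
  simp only [prod_range_succ', h, prod_mul_distrib, prod_const, card_range, pow_zero]
  ring

theorem prod_pow_sub_pow_eq_zero (q : K) {n j : ℕ} (h : n < j) :
    ∏ i ∈ range j, (q ^ n - q ^ i) = 0 :=
  prod_eq_zero (mem_range.2 h) (sub_self _)

theorem qPochhammer_zpow_neg_mul_pow {q : K} (hq : q ≠ 0) (n j : ℕ) :
    qPochhammer (q ^ (-(n : ℤ))) q j * q ^ (j * n) = ∏ i ∈ range j, (q ^ n - q ^ i) := by
  have h : ∀ i, (1 - q ^ (-(n : ℤ)) * q ^ i) * q ^ n = q ^ n - q ^ i := fun i => by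
    rw [zpow_neg, zpow_natCast]
    field_simp
  simp_rw [qPochhammer, ← h, prod_mul_distrib, prod_const, card_range, ← pow_mul, mul_comm n]

def qExpansionCoeff (q : K) (n j : ℕ) : K :=
  (∏ i ∈ range j, (q ^ n - q ^ i)) / qPochhammer q q j

theorem qExpansionCoeff_zero_right (q : K) (n : ℕ) : qExpansionCoeff q n 0 = 1 := by
  simp [qExpansionCoeff, qPochhammer]

theorem qExpansionCoeff_eq_zero (q : K) {n j : ℕ} (h : n < j) : qExpansionCoeff q n j = 0 := by
  rw [qExpansionCoeff, prod_pow_sub_pow_eq_zero q h, zero_div]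

theorem qExpansionCoeff_succ_succ {q : K} (n j : ℕ) (hj : qPochhammer q q (j + 1) ≠ 0) :
    qExpansionCoeff q (n + 1) (j + 1) =
      qExpansionCoeff q n (j + 1) - q ^ n * qExpansionCoeff q n j := by
  have hj' : qPochhammer q q j ≠ 0 := left_ne_zero_of_mul (qPochhammer_succ q q j ▸ hj)
  have hfac : 1 - q ^ j * q ≠ 0 :=
    mul_comm q (q ^ j) ▸ right_ne_zero_of_mul (qPochhammer_succ q q j ▸ hj)
  rw [qExpansionCoeff, qExpansionCoeff, qExpansionCoeff, prod_pow_sub_pow_succ_succ,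
    prod_range_succ (fun i => q ^ n - q ^ i), qPochhammer_succ]
  field_simp
  ring

theorem qPochhammer_eq_sum {q : K} {n : ℕ} (hq : ∀ i : ℕ, 1 ≤ i → i ≤ n → q ^ i ≠ 1)
    (t : K) :
    qPochhammer t q n = ∑ j ∈ range (n + 1), qExpansionCoeff q n j * t ^ j := by
  induction n with
  | zero => simp [qPochhammer_zero, qExpansionCoeff_zero_right]
  | succ n ih =>
    have pascal : ∀ j ∈ range (n + 1), qExpansionCoeff q (n + 1) (j + 1) * t ^ (j + 1) =
        qExpansionCoeff q n (j + 1) * t ^ (j + 1) - q ^ n * t * (qExpansionCoeff q n j * t ^ j) :=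
      fun j hj => by
        rw [qExpansionCoeff_succ_succ n j (qPochhammer_self_ne_zero fun i h1 h2 =>
          hq i h1 (by simp at hj; omega))]
        ring
    have shift : ∑ j ∈ range (n + 1), qExpansionCoeff q n (j + 1) * t ^ (j + 1) =
        ∑ j ∈ range (n + 1), qExpansionCoeff q n j * t ^ j - 1 := by
      have h := sum_range_succ' (fun j => qExpansionCoeff q n j * t ^ j) (n + 1)
      rw [sum_range_succ, qExpansionCoeff_eq_zero q n.lt_succ_self, qExpansionCoeff_zero_right]
        at h
      linear_combination -h
    rw [qPochhammer_succ, ih fun i h1 h2 => hq i h1 (h2.trans n.le_succ),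
      sum_range_succ' (fun j => qExpansionCoeff q (n + 1) j * t ^ j),
      sum_congr rfl pascal, sum_sub_distrib, shift, ← mul_sum, qExpansionCoeff_zero_right]
    ring

/-- **Finite q-binomial expansion** (relation (1.3.2) of Gasper–Rahman, in the
normalization used in the paper):
`(t;q)_n = ∑_{j=0}^{n} ((q^{-n};q)_j / (q;q)_j) * q^{j n} * t^j`,
where `(a;q)_m = ∏_{i=0}^{m-1} (1 - a q^i)`. -/
theorem q_pochhammer_expansion (n : ℕ) (q : ℂ) (hq0 : q ≠ 0)
    (hq : ∀ i : ℕ, 1 ≤ i → i ≤ n → q ^ i ≠ 1) (t : ℂ) :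
    ∏ i ∈ Finset.range n, (1 - t * q ^ i) =
      ∑ j ∈ Finset.range (n + 1),
        (∏ i ∈ Finset.range j, (1 - q ^ (-(n : ℤ)) * q ^ i)) /
            (∏ i ∈ Finset.range j, (1 - q ^ (i + 1))) *
          q ^ (j * n) * t ^ j := by
  have hself : ∀ j, ∏ i ∈ range j, (1 - q ^ (i + 1)) = qPochhammer q q j := fun j =>
    prod_congr rfl fun i _ => by rw [pow_succ']
  refine (qPochhammer_eq_sum hq t).trans (sum_congr rfl fun j _ => ?_)
  rw [hself, div_mul_eq_mul_div, ← qPochhammer, qPochhammer_zpow_neg_mul_pow hq0, qExpansionCoeff]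
end

section
/- Let R be a commutative ring, A a bialgebra over R, and F₁, F₂ two A-module algebras. For K ∈ F₁ ⊗_R F₂, the R-linear operator π(K) : F₁ ⊗_R F₂ → F₁ ⊗_R F₂ is a morphism of A-modules (i.e. A-linear for the comultiplication action on F₁ ⊗_R F₂) if and only if K is invariant, i.e. a • K = ε(a)·K for all a ∈ A. -/
/-!
Write `π(K)(ψ₁ ⊗ ψ₂) = (ψ₁ ⊗ 1) · K · (1 ⊗ ψ₂)`. Coassociativity together with the `A`-linearity
of the multiplications gives `a • ((x ⊗ 1) N) = Σ (a₍₁₎ x ⊗ 1)(a₍₂₎ • N)` and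
`a • (N (1 ⊗ y)) = Σ (a₍₁₎ • N)(1 ⊗ a₍₂₎ y)`. For invariant `K` the middle factor `a₍₂₎ • K`
collapses to `ε(a₍₂₎) K`, and the counit axiom turns the result into `π(K)(a • (ψ₁ ⊗ ψ₂))`.
Conversely, `π(K)(1 ⊗ 1) = K` and `1 ⊗ 1` is invariant, so evaluating equivariance at `1 ⊗ 1`
gives invariance of `K`.
-/

open TensorProduct

/-- Given `R`-linear actions `ρ₁ : A → End F`, `ρ₂ : A → End G`, the action of
`a : A` on `F ⊗[R] G` obtained by restricting the `(A ⊗ A)`-action along the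
comultiplication: `a • (ψ₁ ⊗ ψ₂) = Σ (a₍₁₎ • ψ₁) ⊗ (a₍₂₎ • ψ₂)`. -/
noncomputable def tensorAct (R : Type*) {A F G : Type*} [CommRing R] [Ring A]
    [Bialgebra R A] [AddCommGroup F] [Module R F] [AddCommGroup G] [Module R G]
    (ρ₁ : A →ₗ[R] F →ₗ[R] F) (ρ₂ : A →ₗ[R] G →ₗ[R] G) (a : A) :
    F ⊗[R] G →ₗ[R] F ⊗[R] G :=
  TensorProduct.homTensorHomMap (RingHom.id R) F G F G
    (TensorProduct.map ρ₁ ρ₂ (Coalgebra.comul a))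

/-- The representation `π` of the algebra `F₁ᵒᵖ ⊗[R] F₂` on the vector space
`F₁ ⊗[R] F₂`: for `K = Σ f₁ ⊗ f₂` one has
`π K (ψ₁ ⊗ ψ₂) = Σ (ψ₁ * f₁) ⊗ (f₂ * ψ₂)`. -/
noncomputable def piMap (R : Type*) {F G : Type*} [CommRing R] [Ring F]
    [Algebra R F] [Ring G] [Algebra R G] :
    F ⊗[R] G →ₗ[R] F ⊗[R] G →ₗ[R] F ⊗[R] G :=
  (TensorProduct.homTensorHomMap (RingHom.id R) F G F G).comp
    (TensorProduct.map (LinearMap.mul R F).flip (LinearMap.mul R G))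

open Coalgebra

section TensorAct

variable {R A : Type*} [CommRing R] [Ring A] [Bialgebra R A] {ι : Type*} {a : A}

lemma tensorAct_tmul_eq_sum {F G : Type*} [AddCommGroup F] [Module R F] [AddCommGroup G]
    [Module R G] (ρ : A →ₗ[R] F →ₗ[R] F) (σ : A →ₗ[R] G →ₗ[R] G) (r : Repr R a ι)
    (x : F) (y : G) :
    tensorAct R ρ σ a (x ⊗ₜ y) = ∑ i ∈ r.index, ρ (r.left i) x ⊗ₜ σ (r.right i) y := by
  simp [tensorAct, ← r.eq, map_sum]

lemma tensorAct_tmul_of_invariant {F G : Type*} [AddCommGroup F] [Module R F] [AddCommGroup G]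
    [Module R G] (ρ : A →ₗ[R] F →ₗ[R] F) (σ : A →ₗ[R] G →ₗ[R] G) {x : F} {y : G}
    (hx : ∀ b : A, ρ b x = counit (R := R) b • x) (hy : ∀ b : A, σ b y = counit (R := R) b • y)
    (a : A) :
    tensorAct R ρ σ a (x ⊗ₜ y) = counit (R := R) a • (x ⊗ₜ y) := by
  let r := Repr.arbitrary R a
  have hε : ∑ i ∈ r.index, counit (R := R) (r.left i) * counit (R := R) (r.right i) =
      counit (R := R) a := by
    conv_rhs => rw [← sum_counit_smul r]
    simp [map_sum]
  rw [tensorAct_tmul_eq_sum ρ σ r, ← hε, Finset.sum_smul]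
  simp [hx, hy, smul_tmul', smul_smul, mul_comm]

lemma act_mul_eq_sum {F : Type*} [Ring F] [Algebra R F] {ρ : A →ₗ[R] F →ₗ[R] F}
    (hcov : ∀ b : A, LinearMap.mul' R F ∘ₗ tensorAct R ρ ρ b = ρ b ∘ₗ LinearMap.mul' R F)
    (r : Repr R a ι) (x y : F) :
    ρ a (x * y) = ∑ i ∈ r.index, ρ (r.left i) x * ρ (r.right i) y := by
  simpa [tensorAct_tmul_eq_sum ρ ρ r] using (LinearMap.congr_fun (hcov a) (x ⊗ₜ y)).symm

lemma tensorAct_rTensor_mulLeft {F G : Type*} [Ring F] [Algebra R F] [AddCommGroup G]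
    [Module R G] {ρ : A →ₗ[R] F →ₗ[R] F} (σ : A →ₗ[R] G →ₗ[R] G)
    (hcov : ∀ b : A, LinearMap.mul' R F ∘ₗ tensorAct R ρ ρ b = ρ b ∘ₗ LinearMap.mul' R F)
    (r : Repr R a ι) (x : F) (N : F ⊗[R] G) :
    tensorAct R ρ σ a ((LinearMap.mulLeft R x).rTensor G N) =
      ∑ i ∈ r.index,
        (LinearMap.mulLeft R (ρ (r.left i) x)).rTensor G (tensorAct R ρ σ (r.right i) N) := by
  induction N using TensorProduct.induction_on with
  | zero => simp
  | add N N' hN hN' => simp only [map_add, hN, hN', Finset.sum_add_distrib]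
  | tmul y z =>
    -- both sides are images of the two bracketings of `a₍₁₎ ⊗ a₍₂₎ ⊗ a₍₃₎`
    let trilinear : A ⊗[R] (A ⊗[R] A) →ₗ[R] F ⊗[R] G :=
      TensorProduct.map (LinearMap.mul' R F ∘ₗ TensorProduct.map (ρ.flip x) (ρ.flip y))
        (σ.flip z) ∘ₗ (TensorProduct.assoc R A A A).symm
    have h := congr(trilinear $(sum_tmul_tmul_eq r (fun i ↦ Repr.arbitrary R (r.left i))
      (fun i ↦ Repr.arbitrary R (r.right i))))
    simp only [trilinear, map_sum] at h
    simpa [tensorAct_tmul_eq_sum ρ σ r, tensorAct_tmul_eq_sum ρ σ (Repr.arbitrary R _),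
      act_mul_eq_sum hcov (Repr.arbitrary R _), TensorProduct.sum_tmul, Finset.mul_sum] using h

lemma tensorAct_lTensor_mulRight {F G : Type*} [AddCommGroup F] [Module R F] [Ring G]
    [Algebra R G] (ρ : A →ₗ[R] F →ₗ[R] F) {σ : A →ₗ[R] G →ₗ[R] G}
    (hcov : ∀ b : A, LinearMap.mul' R G ∘ₗ tensorAct R σ σ b = σ b ∘ₗ LinearMap.mul' R G)
    (r : Repr R a ι) (z : G) (N : F ⊗[R] G) :
    tensorAct R ρ σ a ((LinearMap.mulRight R z).lTensor F N) =
      ∑ i ∈ r.index,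
        (LinearMap.mulRight R (σ (r.right i) z)).lTensor F (tensorAct R ρ σ (r.left i) N) := by
  induction N using TensorProduct.induction_on with
  | zero => simp
  | add N N' hN hN' => simp only [map_add, hN, hN', Finset.sum_add_distrib]
  | tmul x y =>
    let trilinear : A ⊗[R] (A ⊗[R] A) →ₗ[R] F ⊗[R] G :=
      TensorProduct.map (ρ.flip x)
        (LinearMap.mul' R G ∘ₗ TensorProduct.map (σ.flip y) (σ.flip z))
    have h := congr(trilinear $(sum_tmul_tmul_eq r (fun i ↦ Repr.arbitrary R (r.left i))
      (fun i ↦ Repr.arbitrary R (r.right i))))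
    simp only [trilinear, map_sum] at h
    simpa [tensorAct_tmul_eq_sum ρ σ r, tensorAct_tmul_eq_sum ρ σ (Repr.arbitrary R _),
      act_mul_eq_sum hcov (Repr.arbitrary R _), TensorProduct.tmul_sum, Finset.sum_mul]
      using h.symm

end TensorAct

section PiMap

variable {R : Type*} [CommRing R] {F G : Type*} [Ring F] [Algebra R F] [Ring G] [Algebra R G]

lemma piMap_one_tmul (L : F ⊗[R] G) (y : G) :
    piMap R L (1 ⊗ₜ y) = (LinearMap.mulRight R y).lTensor F L := by
  induction L using TensorProduct.induction_on with
  | zero => simp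
  | add L L' hL hL' => simp only [map_add, LinearMap.add_apply, hL, hL']
  | tmul f g => simp [piMap]

lemma piMap_tmul (L : F ⊗[R] G) (x : F) (y : G) :
    piMap R L (x ⊗ₜ y) = (LinearMap.mulLeft R x).rTensor G (piMap R L (1 ⊗ₜ y)) := by
  induction L using TensorProduct.induction_on with
  | zero => simp
  | add L L' hL hL' => simp only [map_add, LinearMap.add_apply, hL, hL']
  | tmul f g => simp [piMap]

lemma piMap_one_tmul_one (L : F ⊗[R] G) : piMap R L (1 ⊗ₜ 1) = L := by
  simp [piMap_one_tmul]

end PiMap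

section Invariant

variable {R A : Type*} [CommRing R] [Ring A] [Bialgebra R A]
  {F₁ F₂ : Type*} [Ring F₁] [Algebra R F₁] [Ring F₂] [Algebra R F₂]
  {ρ₁ : A →ₗ[R] F₁ →ₗ[R] F₁} {ρ₂ : A →ₗ[R] F₂ →ₗ[R] F₂}

lemma tensorAct_piMap_one_tmul_of_invariant
    (h2cov : ∀ b : A, LinearMap.mul' R F₂ ∘ₗ tensorAct R ρ₂ ρ₂ b = ρ₂ b ∘ₗ LinearMap.mul' R F₂)
    {K : F₁ ⊗[R] F₂} (hK : ∀ b : A, tensorAct R ρ₁ ρ₂ b K = counit (R := R) b • K)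
    (a : A) (y : F₂) :
    tensorAct R ρ₁ ρ₂ a (piMap R K (1 ⊗ₜ y)) = piMap R K (1 ⊗ₜ ρ₂ a y) := by
  let r := Repr.arbitrary R a
  rw [piMap_one_tmul, tensorAct_lTensor_mulRight ρ₁ h2cov r]
  simp only [hK, map_smul, ← piMap_one_tmul]
  conv_rhs => rw [← sum_counit_smul r]
  simp [map_sum, tmul_sum]

lemma tensorAct_comp_piMap_of_invariant
    (h1cov : ∀ b : A, LinearMap.mul' R F₁ ∘ₗ tensorAct R ρ₁ ρ₁ b = ρ₁ b ∘ₗ LinearMap.mul' R F₁)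
    (h2cov : ∀ b : A, LinearMap.mul' R F₂ ∘ₗ tensorAct R ρ₂ ρ₂ b = ρ₂ b ∘ₗ LinearMap.mul' R F₂)
    {K : F₁ ⊗[R] F₂} (hK : ∀ b : A, tensorAct R ρ₁ ρ₂ b K = counit (R := R) b • K) (a : A) :
    tensorAct R ρ₁ ρ₂ a ∘ₗ piMap R K = piMap R K ∘ₗ tensorAct R ρ₁ ρ₂ a := by
  refine TensorProduct.ext' fun x y ↦ ?_
  let r := Repr.arbitrary R a
  calc tensorAct R ρ₁ ρ₂ a (piMap R K (x ⊗ₜ y))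
      = ∑ i ∈ r.index, (LinearMap.mulLeft R (ρ₁ (r.left i) x)).rTensor F₂
          (tensorAct R ρ₁ ρ₂ (r.right i) (piMap R K (1 ⊗ₜ y))) := by
        rw [piMap_tmul, tensorAct_rTensor_mulLeft ρ₂ h1cov r]
    _ = ∑ i ∈ r.index, piMap R K (ρ₁ (r.left i) x ⊗ₜ ρ₂ (r.right i) y) := by
        simp only [tensorAct_piMap_one_tmul_of_invariant h2cov hK, ← piMap_tmul]
    _ = piMap R K (tensorAct R ρ₁ ρ₂ a (x ⊗ₜ y)) := by
        rw [tensorAct_tmul_eq_sum ρ₁ ρ₂ r, map_sum]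

end Invariant

theorem piMap_equivariant_iff_invariant_general
    {R A F₁ F₂ : Type*} [CommRing R] [Ring A] [Bialgebra R A]
    [Ring F₁] [Algebra R F₁] [Ring F₂] [Algebra R F₂]
    (ρ₁ : A →ₗ[R] F₁ →ₗ[R] F₁) (ρ₂ : A →ₗ[R] F₂ →ₗ[R] F₂)
    -- the multiplications `F₁ ⊗ F₁ → F₁` and `F₂ ⊗ F₂ → F₂` are `A`-linear:
    (h1cov : ∀ a : A,
      (LinearMap.mul' R F₁) ∘ₗ tensorAct R ρ₁ ρ₁ a = ρ₁ a ∘ₗ LinearMap.mul' R F₁)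
    (h2cov : ∀ a : A,
      (LinearMap.mul' R F₂) ∘ₗ tensorAct R ρ₂ ρ₂ a = ρ₂ a ∘ₗ LinearMap.mul' R F₂)
    -- the units are invariant: `a • 1 = ε(a) • 1`:
    (h1unit : ∀ a : A, ρ₁ a 1 = Coalgebra.counit (R := R) a • (1 : F₁))
    (h2unit : ∀ a : A, ρ₂ a 1 = Coalgebra.counit (R := R) a • (1 : F₂))
    (K : F₁ ⊗[R] F₂) :
    (∀ a : A, tensorAct R ρ₁ ρ₂ a ∘ₗ piMap R K = piMap R K ∘ₗ tensorAct R ρ₁ ρ₂ a) ↔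
      ∀ a : A, tensorAct R ρ₁ ρ₂ a K = Coalgebra.counit (R := R) a • K := by
  refine ⟨fun hequiv a ↦ ?_, tensorAct_comp_piMap_of_invariant h1cov h2cov⟩
  calc tensorAct R ρ₁ ρ₂ a K
      = piMap R K (tensorAct R ρ₁ ρ₂ a (1 ⊗ₜ 1)) := by
        rw [← LinearMap.comp_apply, ← hequiv, LinearMap.comp_apply, piMap_one_tmul_one]
    _ = counit (R := R) a • K := by
        rw [tensorAct_tmul_of_invariant ρ₁ ρ₂ h1unit h2unit, map_smul, piMap_one_tmul_one]

/-- Let `A` be a bialgebra over a commutative ring `R` and let `F₁`, `F₂` be two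
`A`-module algebras (with actions `ρ₁`, `ρ₂`).  For `K ∈ F₁ ⊗[R] F₂`, the linear
operator `π K : F₁ ⊗[R] F₂ → F₁ ⊗[R] F₂` is a morphism of `A`-modules iff `K`
is an invariant: `a • K = ε(a) • K` for all `a ∈ A`. -/
theorem piMap_equivariant_iff_invariant
    {R A F₁ F₂ : Type*} [CommRing R] [Ring A] [Bialgebra R A]
    [Ring F₁] [Algebra R F₁] [Ring F₂] [Algebra R F₂]
    (ρ₁ : A →ₗ[R] F₁ →ₗ[R] F₁) (ρ₂ : A →ₗ[R] F₂ →ₗ[R] F₂)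
    -- `ρ₁`, `ρ₂` are module structures:
    (h1one : ρ₁ 1 = LinearMap.id) (h1mul : ∀ a b : A, ρ₁ (a * b) = ρ₁ a ∘ₗ ρ₁ b)
    (h2one : ρ₂ 1 = LinearMap.id) (h2mul : ∀ a b : A, ρ₂ (a * b) = ρ₂ a ∘ₗ ρ₂ b)
    -- the multiplications `F₁ ⊗ F₁ → F₁` and `F₂ ⊗ F₂ → F₂` are `A`-linear:
    (h1cov : ∀ a : A,
      (LinearMap.mul' R F₁) ∘ₗ tensorAct R ρ₁ ρ₁ a = ρ₁ a ∘ₗ LinearMap.mul' R F₁)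
    (h2cov : ∀ a : A,
      (LinearMap.mul' R F₂) ∘ₗ tensorAct R ρ₂ ρ₂ a = ρ₂ a ∘ₗ LinearMap.mul' R F₂)
    -- the units are invariant: `a • 1 = ε(a) • 1`:
    (h1unit : ∀ a : A, ρ₁ a 1 = Coalgebra.counit (R := R) a • (1 : F₁))
    (h2unit : ∀ a : A, ρ₂ a 1 = Coalgebra.counit (R := R) a • (1 : F₂))
    (K : F₁ ⊗[R] F₂) :
    (∀ a : A, tensorAct R ρ₁ ρ₂ a ∘ₗ piMap R K = piMap R K ∘ₗ tensorAct R ρ₁ ρ₂ a) ↔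
      ∀ a : A, tensorAct R ρ₁ ρ₂ a K = Coalgebra.counit (R := R) a • K :=
  piMap_equivariant_iff_invariant_general ρ₁ ρ₂ h1cov h2cov h1unit h2unit K
end

section
/- In the setting of the quantum principal homogeneous space (both factors of type X̃): assume additionally the determinant relations t₂₂t₁₁ − q·t₂₁t₁₂ = 1 and τ₁₁τ₂₂ − q·τ₁₂τ₂₁ = 1. Then the elements k₁₁, k₁₂, k₂₁, k₂₂ satisfy: k₁₁k₁₂ = q⁻¹k₁₂k₁₁, k₂₁k₂₂ = q⁻¹k₂₂k₂₁, k₁₁k₂₁ = q⁻¹k₂₁k₁₁, k₁₂k₂₂ = q⁻¹k₂₂k₁₂, k₁₂k₂₁ = k₂₁k₁₂, k₁₁k₂₂ − k₂₂k₁₁ = (q⁻¹ − q)k₁₂k₂₁, and k₂₂k₁₁ − q·k₁₂k₂₁ = 1. -/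
/-!
The kernel matrix is the product `k = t · S(τ)` of `t` with the antipode
`S(τ) = !![τ₂₂, -q⁻¹τ₁₂; -qτ₂₁, τ₁₁]` of `τ`. The opposite `SL_q(2)` relations on `t` are the
`M_{q⁻¹}(2)` relations, and the antipode turns `M_q(2)` relations into `M_{q⁻¹}(2)` relations.
Since the entries of `t` and `S(τ)` commute, the coproduct of `M_{q⁻¹}(2)` shows that `k` again
satisfies the `M_{q⁻¹}(2)` relations, and multiplicativity of the quantum determinant gives
`det k = det t · det τ = 1`.
-/

open MulOpposite

section QuantumMatrix

variable {K A : Type*} [Field K] [Ring A] [Algebra K A]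

/-- The relations of the quantum matrix bialgebra `M_p(2)` on the matrix `!![a, b; c, d]`. -/
structure IsQuantumMatrix (p : K) (a b c d : A) : Prop where
  ab : a * b = p • (b * a)
  cd : c * d = p • (d * c)
  ac : a * c = p • (c * a)
  bd : b * d = p • (d * b)
  bc : b * c = c * b
  ad : a * d = d * a + (p - p⁻¹) • (b * c)

/-- The quantum determinant of `M_p(2)`, written `d a - p⁻¹ b c` rather than the equivalent
`a d - p b c`. -/
def quantumDet (p : K) (a b c d : A) : A := d * a - p⁻¹ • (b * c)

variable {p : K} {a b c d a' b' c' d' : A}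

namespace IsQuantumMatrix

theorem of_op (hp : p ≠ 0) (h : IsQuantumMatrix p (op a) (op b) (op c) (op d)) :
    IsQuantumMatrix p⁻¹ a b c d := by
  obtain ⟨ab, cd, ac, bd, bc, ad⟩ := h
  simp only [← op_mul, ← op_smul, ← op_add, op_inj] at ab cd ac bd bc ad
  constructor <;>
    simp only [smul_smul, inv_mul_cancel₀ hp, one_smul, inv_inv, ab, cd, ac, bd, bc, ad]
  module

theorem antipode (hp : p ≠ 0) (h : IsQuantumMatrix p a b c d) :
    IsQuantumMatrix p⁻¹ d (-p⁻¹ • b) (-p • c) a := by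
  obtain ⟨ab, cd, ac, bd, bc, ad⟩ := h
  constructor <;>
  · simp only [neg_smul, neg_mul, mul_neg, smul_neg, neg_neg, smul_mul_assoc, mul_smul_comm,
      smul_smul, ab, cd, ac, bd, ← bc, ad]
    match_scalars <;> field_simp <;> ring

theorem mul (hp : p ≠ 0) (h : IsQuantumMatrix p a b c d) (h' : IsQuantumMatrix p a' b' c' d')
    (hcomm : ∀ x ∈ ({a, b, c, d} : Set A), ∀ y ∈ ({a', b', c', d'} : Set A), Commute x y) :
    IsQuantumMatrix p (a * a' + b * c') (a * b' + b * d') (c * a' + d * c') (c * b' + d * d') := by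
  -- `Commute.mul_mul_mul_comm` is a permutation lemma, which `simp` applies only in term order;
  -- instantiated at each pair it becomes the rewrite rule `u * y * (x * v) → u * x * (y * v)`.
  have hc : ∀ x ∈ ({a, b, c, d} : Set A), ∀ y ∈ ({a', b', c', d'} : Set A), ∀ u v : A,
      u * y * (x * v) = u * x * (y * v) := fun x hx y hy => (hcomm x hx y hy).symm.mul_mul_mul_comm
  simp only [Set.mem_insert_iff, Set.mem_singleton_iff, forall_eq_or_imp, forall_eq] at hc
  obtain ⟨ab, cd, ac, bd, bc, ad⟩ := h
  obtain ⟨ab', cd', ac', bd', bc', ad'⟩ := h'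
  -- Every term becomes `(x * z) * (y' * w')`, and the relations, oriented towards the order
  -- `d < b < c < a`, bring both factors to normal form.
  constructor <;>
  · simp only [add_mul, mul_add, smul_add, smul_mul_assoc, mul_smul_comm,
      smul_smul, hc, ab, cd, ac, bd, ← bc, ad, ab', cd', ac', bd', ← bc', ad']
    match_scalars <;> field_simp <;> ring

end IsQuantumMatrix

theorem forall_commute_antipode_entries {s : Set A}
    (h : ∀ x ∈ s, ∀ y ∈ ({a, b, c, d} : Set A), Commute x y) :
    ∀ x ∈ s, ∀ y ∈ ({d, -p⁻¹ • b, -p • c, a} : Set A), Commute x y := by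
  intro x hx
  specialize h x hx
  simp only [Set.mem_insert_iff, Set.mem_singleton_iff, forall_eq_or_imp, forall_eq] at h ⊢
  obtain ⟨ha, hb, hc, hd⟩ := h
  exact ⟨hd, hb.smul_right _, hc.smul_right _, ha⟩

theorem quantumDet_antipode (hp : p ≠ 0) :
    quantumDet p⁻¹ d (-p⁻¹ • b) (-p • c) a = a * d - p • (b * c) := by
  simp only [quantumDet, inv_inv, neg_smul, neg_mul, mul_neg, smul_neg, neg_neg, smul_mul_assoc,
    mul_smul_comm, smul_smul, mul_inv_cancel₀ hp, mul_one]

theorem quantumDet_mul (hp : p ≠ 0) (h : IsQuantumMatrix p a b c d)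
    (hcomm : ∀ x ∈ ({a, b, c, d} : Set A), ∀ y ∈ ({a', b', c', d'} : Set A), Commute x y) :
    quantumDet p (a * a' + b * c') (a * b' + b * d') (c * a' + d * c') (c * b' + d * d') =
      quantumDet p a b c d * quantumDet p a' b' c' d' := by
  have hc : ∀ x ∈ ({a, b, c, d} : Set A), ∀ y ∈ ({a', b', c', d'} : Set A), ∀ u v : A,
      u * y * (x * v) = u * x * (y * v) := fun x hx y hy => (hcomm x hx y hy).symm.mul_mul_mul_comm
  simp only [Set.mem_insert_iff, Set.mem_singleton_iff, forall_eq_or_imp, forall_eq] at hc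
  obtain ⟨-, -, ac, bd, bc, ad⟩ := h
  simp only [quantumDet, add_mul, mul_add, sub_mul, mul_sub, smul_add, smul_sub, smul_mul_assoc,
    mul_smul_comm, smul_smul, hc, ac, bd, ← bc, ad]
  match_scalars <;> field_simp <;> ring

end QuantumMatrix

theorem kernel_relations_XX_general
    {A : Type*} [Ring A] [Algebra ℂ A] (q : ℝ) (hq0 : 0 < q)
    (t₁₁ t₁₂ t₂₁ t₂₂ τ₁₁ τ₁₂ τ₂₁ τ₂₂ : A)
    -- (i) every tᵢⱼ commutes with every τₖₗ:
    (hcomm : ∀ s ∈ ({t₁₁, t₁₂, t₂₁, t₂₂} : Set A),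
      ∀ σ ∈ ({τ₁₁, τ₁₂, τ₂₁, τ₂₂} : Set A), s * σ = σ * s)
    -- (ii) the τ's satisfy the quantum SL₂ relations:
    (hτ1 : τ₁₁ * τ₁₂ = (q : ℂ) • (τ₁₂ * τ₁₁)) (hτ2 : τ₂₁ * τ₂₂ = (q : ℂ) • (τ₂₂ * τ₂₁))
    (hτ3 : τ₁₁ * τ₂₁ = (q : ℂ) • (τ₂₁ * τ₁₁)) (hτ4 : τ₁₂ * τ₂₂ = (q : ℂ) • (τ₂₂ * τ₁₂))
    (hτ5 : τ₁₂ * τ₂₁ = τ₂₁ * τ₁₂)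
    (hτ6 : τ₁₁ * τ₂₂ - τ₂₂ * τ₁₁ = ((q : ℂ) - (q : ℂ)⁻¹) • (τ₁₂ * τ₂₁))
    -- (iii) the t's satisfy the opposite quantum SL₂ relations:
    (ht1 : t₁₂ * t₁₁ = (q : ℂ) • (t₁₁ * t₁₂)) (ht2 : t₂₂ * t₂₁ = (q : ℂ) • (t₂₁ * t₂₂))
    (ht3 : t₂₁ * t₁₁ = (q : ℂ) • (t₁₁ * t₂₁)) (ht4 : t₂₂ * t₁₂ = (q : ℂ) • (t₁₂ * t₂₂))
    (ht5 : t₂₁ * t₁₂ = t₁₂ * t₂₁)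
    (ht6 : t₂₂ * t₁₁ - t₁₁ * t₂₂ = ((q : ℂ) - (q : ℂ)⁻¹) • (t₂₁ * t₁₂))
    -- determinant relations:
    (hdet_t : t₂₂ * t₁₁ - (q : ℂ) • (t₂₁ * t₁₂) = 1)
    (hdet_τ : τ₁₁ * τ₂₂ - (q : ℂ) • (τ₁₂ * τ₂₁) = 1)
    -- the invariant kernels:
    (k₁₁ k₁₂ k₂₁ k₂₂ : A)
    (hk11 : k₁₁ = t₁₁ * τ₂₂ - (q : ℂ) • (t₁₂ * τ₂₁))
    (hk12 : k₁₂ = -(q : ℂ)⁻¹ • (t₁₁ * τ₁₂) + t₁₂ * τ₁₁)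
    (hk21 : k₂₁ = t₂₁ * τ₂₂ - (q : ℂ) • (t₂₂ * τ₂₁))
    (hk22 : k₂₂ = -(q : ℂ)⁻¹ • (t₂₁ * τ₁₂) + t₂₂ * τ₁₁) :
    k₁₁ * k₁₂ = (q : ℂ)⁻¹ • (k₁₂ * k₁₁) ∧
    k₂₁ * k₂₂ = (q : ℂ)⁻¹ • (k₂₂ * k₂₁) ∧
    k₁₁ * k₂₁ = (q : ℂ)⁻¹ • (k₂₁ * k₁₁) ∧
    k₁₂ * k₂₂ = (q : ℂ)⁻¹ • (k₂₂ * k₁₂) ∧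
    k₁₂ * k₂₁ = k₂₁ * k₁₂ ∧
    k₁₁ * k₂₂ - k₂₂ * k₁₁ = ((q : ℂ)⁻¹ - (q : ℂ)) • (k₁₂ * k₂₁) ∧
    k₂₂ * k₁₁ - (q : ℂ) • (k₁₂ * k₂₁) = 1 := by
  have hq : (q : ℂ) ≠ 0 := Complex.ofReal_ne_zero.mpr hq0.ne'
  have ht : IsQuantumMatrix (q : ℂ)⁻¹ t₁₁ t₁₂ t₂₁ t₂₂ := .of_op hq
    ⟨congrArg op ht1, congrArg op ht2, congrArg op ht3, congrArg op ht4, congrArg op ht5,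
      congrArg op (eq_add_of_sub_eq' ht6)⟩
  have hσ : IsQuantumMatrix (q : ℂ)⁻¹ τ₂₂ (-(q : ℂ)⁻¹ • τ₁₂) (-(q : ℂ) • τ₂₁) τ₁₁ :=
    .antipode hq ⟨hτ1, hτ2, hτ3, hτ4, hτ5, eq_add_of_sub_eq' hτ6⟩
  have hcomm' := forall_commute_antipode_entries (p := (q : ℂ)) hcomm
  obtain ⟨h₁, h₂, h₃, h₄, h₅, h₆⟩ := ht.mul (inv_ne_zero hq) hσ hcomm'
  have hdet_t' : quantumDet (q : ℂ)⁻¹ t₁₁ t₁₂ t₂₁ t₂₂ = 1 := by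
    rw [quantumDet, inv_inv, ← ht5, hdet_t]
  have hdet := quantumDet_mul (inv_ne_zero hq) ht hcomm'
  rw [hdet_t', quantumDet_antipode hq, hdet_τ, mul_one, quantumDet, inv_inv] at hdet
  obtain rfl : k₁₁ = t₁₁ * τ₂₂ + t₁₂ * (-(q : ℂ) • τ₂₁) := by
    rw [hk11, mul_smul_comm, neg_smul, sub_eq_add_neg]
  obtain rfl : k₁₂ = t₁₁ * (-(q : ℂ)⁻¹ • τ₁₂) + t₁₂ * τ₁₁ := by rw [hk12, mul_smul_comm]
  obtain rfl : k₂₁ = t₂₁ * τ₂₂ + t₂₂ * (-(q : ℂ) • τ₂₁) := by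
    rw [hk21, mul_smul_comm, neg_smul, sub_eq_add_neg]
  obtain rfl : k₂₂ = t₂₁ * (-(q : ℂ)⁻¹ • τ₁₂) + t₂₂ * τ₁₁ := by rw [hk22, mul_smul_comm]
  rw [inv_inv] at h₆
  exact ⟨h₁, h₂, h₃, h₄, h₅, sub_eq_of_eq_add' h₆, hdet⟩

/-- **Commutation relations for the invariant kernels, case `Y₁ = Y₂ = X̃`.**
In a unital ℂ-algebra containing a copy of the opposite quantum `SL₂` (the
`t`'s) and of quantum `SL₂` (the `τ`'s), mutually commuting, and satisfying
the determinant relations `t₂₂t₁₁ - q t₂₁t₁₂ = 1`, `τ₁₁τ₂₂ - q τ₁₂τ₂₁ = 1`,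
the kernels `k₁₁ = t₁₁τ₂₂ - q t₁₂τ₂₁`, `k₁₂ = -q⁻¹t₁₁τ₁₂ + t₁₂τ₁₁`,
`k₂₁ = t₂₁τ₂₂ - q t₂₂τ₂₁`, `k₂₂ = -q⁻¹t₂₁τ₁₂ + t₂₂τ₁₁` satisfy the quantum
`SL₂` relations with `q` replaced by `q⁻¹`, with quantum determinant
`k₂₂k₁₁ - q k₁₂k₂₁ = 1`. -/
theorem kernel_relations_XX
    {A : Type*} [Ring A] [Algebra ℂ A] (q : ℝ) (hq0 : 0 < q) (hq1 : q < 1)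
    (t₁₁ t₁₂ t₂₁ t₂₂ τ₁₁ τ₁₂ τ₂₁ τ₂₂ : A)
    -- (i) every tᵢⱼ commutes with every τₖₗ:
    (hcomm : ∀ s ∈ ({t₁₁, t₁₂, t₂₁, t₂₂} : Set A),
      ∀ σ ∈ ({τ₁₁, τ₁₂, τ₂₁, τ₂₂} : Set A), s * σ = σ * s)
    -- (ii) the τ's satisfy the quantum SL₂ relations:
    (hτ1 : τ₁₁ * τ₁₂ = (q : ℂ) • (τ₁₂ * τ₁₁)) (hτ2 : τ₂₁ * τ₂₂ = (q : ℂ) • (τ₂₂ * τ₂₁))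
    (hτ3 : τ₁₁ * τ₂₁ = (q : ℂ) • (τ₂₁ * τ₁₁)) (hτ4 : τ₁₂ * τ₂₂ = (q : ℂ) • (τ₂₂ * τ₁₂))
    (hτ5 : τ₁₂ * τ₂₁ = τ₂₁ * τ₁₂)
    (hτ6 : τ₁₁ * τ₂₂ - τ₂₂ * τ₁₁ = ((q : ℂ) - (q : ℂ)⁻¹) • (τ₁₂ * τ₂₁))
    -- (iii) the t's satisfy the opposite quantum SL₂ relations:
    (ht1 : t₁₂ * t₁₁ = (q : ℂ) • (t₁₁ * t₁₂)) (ht2 : t₂₂ * t₂₁ = (q : ℂ) • (t₂₁ * t₂₂))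
    (ht3 : t₂₁ * t₁₁ = (q : ℂ) • (t₁₁ * t₂₁)) (ht4 : t₂₂ * t₁₂ = (q : ℂ) • (t₁₂ * t₂₂))
    (ht5 : t₂₁ * t₁₂ = t₁₂ * t₂₁)
    (ht6 : t₂₂ * t₁₁ - t₁₁ * t₂₂ = ((q : ℂ) - (q : ℂ)⁻¹) • (t₂₁ * t₁₂))
    -- determinant relations:
    (hdet_t : t₂₂ * t₁₁ - (q : ℂ) • (t₂₁ * t₁₂) = 1)
    (hdet_τ : τ₁₁ * τ₂₂ - (q : ℂ) • (τ₁₂ * τ₂₁) = 1)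
    -- the invariant kernels:
    (k₁₁ k₁₂ k₂₁ k₂₂ : A)
    (hk11 : k₁₁ = t₁₁ * τ₂₂ - (q : ℂ) • (t₁₂ * τ₂₁))
    (hk12 : k₁₂ = -(q : ℂ)⁻¹ • (t₁₁ * τ₁₂) + t₁₂ * τ₁₁)
    (hk21 : k₂₁ = t₂₁ * τ₂₂ - (q : ℂ) • (t₂₂ * τ₂₁))
    (hk22 : k₂₂ = -(q : ℂ)⁻¹ • (t₂₁ * τ₁₂) + t₂₂ * τ₁₁) :
    k₁₁ * k₁₂ = (q : ℂ)⁻¹ • (k₁₂ * k₁₁) ∧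
    k₂₁ * k₂₂ = (q : ℂ)⁻¹ • (k₂₂ * k₂₁) ∧
    k₁₁ * k₂₁ = (q : ℂ)⁻¹ • (k₂₁ * k₁₁) ∧
    k₁₂ * k₂₂ = (q : ℂ)⁻¹ • (k₂₂ * k₁₂) ∧
    k₁₂ * k₂₁ = k₂₁ * k₁₂ ∧
    k₁₁ * k₂₂ - k₂₂ * k₁₁ = ((q : ℂ)⁻¹ - (q : ℂ)) • (k₁₂ * k₂₁) ∧
    k₂₂ * k₁₁ - (q : ℂ) • (k₁₂ * k₂₁) = 1 :=
  kernel_relations_XX_general q hq0 t₁₁ t₁₂ t₂₁ t₂₂ τ₁₁ τ₁₂ τ₂₁ τ₂₂ hcomm hτ1 hτ2 hτ3 hτ4 hτ5 hτ6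
    ht1 ht2 ht3 ht4 ht5 ht6 hdet_t hdet_τ k₁₁ k₁₂ k₂₁ k₂₂ hk11 hk12 hk21 hk22
end

section
/- In the setting of the quantum principal homogeneous spaces with t₁₂, t₂₁, τ₁₂, τ₂₁ invertible, set z = q·t₁₂⁻¹t₁₁, z* = t₂₂t₂₁⁻¹, ζ = q·τ₁₁τ₁₂⁻¹, ζ* = τ₂₁⁻¹τ₂₂, x = −q·t₁₂t₂₁, ξ = −q·τ₁₂τ₂₁. Then for every natural number l: k₂₂^l·k₁₁^l = (z*ζ; q⁻²)_l · (t₁₂t₂₁)^l · (τ₁₂τ₂₁)^l · (q⁻²zζ*; q⁻²)_l, and moreover k₂₂^l·k₁₁^l = q^{−2l} · ξ^l · (q²z*ζ; q²)_l · (zζ*; q²)_l · x^l, where for c ∈ A the symbol (c;p)_n denotes Π_{j=0}^{n−1}(1 − p^j·c) (factors pairwise commuting). -/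
section Aux
variable {A : Type*} [Ring A] [Algebra ℂ A]

lemma qcMulLeft {a b b' : A} {c c' : ℂ} (h : a * b = c • (b * a)) (h' : a * b' = c' • (b' * a)) :
    a * (b * b') = (c * c') • (b * b' * a) := by
  rw [← mul_assoc, h, smul_mul_assoc, mul_assoc, h', mul_smul_comm, smul_smul, mul_assoc]

lemma qcMulRight {a a' b : A} {c c' : ℂ} (h : a * b = c • (b * a)) (h' : a' * b = c' • (b * a')) :
    a * a' * b = (c * c') • (b * (a * a')) := by
  rw [mul_assoc, h', mul_smul_comm, ← mul_assoc, h, smul_mul_assoc, smul_smul, mul_assoc,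
    mul_comm c']

lemma qcSmulLeft {a b : A} {c : ℂ} (s : ℂ) (h : a * b = c • (b * a)) :
    (s • a) * b = c • (b * (s • a)) := by
  rw [smul_mul_assoc, h, mul_smul_comm, smul_comm]

lemma qcSmulRight {a b : A} {c : ℂ} (s : ℂ) (h : a * b = c • (b * a)) :
    a * (s • b) = c • ((s • b) * a) := by
  rw [mul_smul_comm, h, smul_mul_assoc, smul_comm]

lemma qcSymm {a b : A} {c : ℂ} (h : a * b = c • (b * a)) (hc : c ≠ 0) :
    b * a = c⁻¹ • (a * b) := by
  rw [h, smul_smul, inv_mul_cancel₀ hc, one_smul]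

lemma qcOfComm {a b : A} (h : a * b = b * a) : a * b = (1 : ℂ) • (b * a) := by
  rw [one_smul, h]

lemma qcConj {a b b' : A} {c : ℂ} (h : a * b = c • (b * a)) (h1 : b * b' = 1) (h2 : b' * b = 1) :
    b' * a = c • (a * b') := by
  calc b' * a = b' * a * (b * b') := by rw [h1, mul_one]
    _ = b' * (a * b) * b' := by rw [← mul_assoc, mul_assoc b' a b]
    _ = b' * (c • (b * a)) * b' := by rw [h]
    _ = c • (b' * b * (a * b')) := by
        rw [mul_smul_comm, smul_mul_assoc, mul_assoc, mul_assoc, mul_assoc]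
    _ = c • (a * b') := by rw [h2, one_mul]

lemma commConj {a b b' : A} (h : a * b = b * a) (h1 : b * b' = 1) (h2 : b' * b = 1) :
    b' * a = a * b' := by
  have h' : a * b = (1 : ℂ) • (b * a) := by simpa using h
  have h2' := qcConj h' h1 h2
  rw [one_smul] at h2'
  exact h2'

lemma qcPowRight {a b : A} {c : ℂ} (h : a * b = c • (b * a)) (n : ℕ) :
    a * b ^ n = c ^ n • (b ^ n * a) := by
  induction n with
  | zero => simp
  | succ n ih =>
    rw [pow_succ' b, ← mul_assoc, h, smul_mul_assoc, mul_assoc, ih, mul_smul_comm, smul_smul,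
      pow_succ' c, ← mul_assoc]

lemma qcPowLeft {a b : A} {c : ℂ} (h : a * b = c • (b * a)) (n : ℕ) :
    a ^ n * b = c ^ n • (b * a ^ n) := by
  induction n with
  | zero => simp
  | succ n ih =>
    rw [pow_succ a, mul_assoc, h, mul_smul_comm, ← mul_assoc, ih, smul_mul_assoc, smul_smul,
      pow_succ c, mul_assoc, mul_comm (c ^ n)]

lemma facComm (u : A) (a b : ℂ) : ((1 : A) - a • u) * (1 - b • u) = (1 - b • u) * (1 - a • u) := by
  simp only [sub_mul, mul_sub, one_mul, mul_one, smul_mul_assoc, mul_smul_comm, smul_smul,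
    smul_sub]
  rw [mul_comm a b]
  abel

lemma prodFacComm (u : A) (f : ℕ → ℂ) (l : ℕ) (b : ℂ) :
    ((List.range l).map (fun j => (1 : A) - f j • u)).prod * (1 - b • u) =
      (1 - b • u) * ((List.range l).map (fun j => (1 : A) - f j • u)).prod := by
  induction l with
  | zero => simp
  | succ l ih =>
    rw [List.range_succ, List.map_append, List.prod_append]
    simp only [List.map_cons, List.map_nil, List.prod_cons, List.prod_nil, mul_one]
    rw [mul_assoc, facComm, ← mul_assoc, ih, mul_assoc]

lemma commuteProd (g u : A) (hgu : Commute g u) (f : ℕ → ℂ) (l : ℕ) :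
    Commute g (((List.range l).map (fun j => (1 : A) - f j • u)).prod) := by
  apply Commute.list_prod_right
  intro x hx
  simp only [List.mem_map, List.mem_range] at hx
  obtain ⟨j, -, rfl⟩ := hx
  exact (Commute.one_right g).sub_right (hgu.smul_right _)

lemma prodLeft {Y u : A} {c : ℂ} (h : Y * u = c • (u * Y)) (l : ℕ) :
    ((1 - u) * Y) ^ l = ((List.range l).map (fun j => (1 : A) - c ^ j • u)).prod * Y ^ l := by
  induction l with
  | zero => simp
  | succ l ih =>
    rw [pow_succ, ih, List.range_succ, List.map_append, List.prod_append]
    simp only [List.map_cons, List.map_nil, List.prod_cons, List.prod_nil, mul_one]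
    have hY : Y ^ l * (1 - u) = (1 - c ^ l • u) * Y ^ l := by
      rw [mul_sub, sub_mul, mul_one, one_mul, qcPowLeft h l, smul_mul_assoc]
    calc ((List.range l).map (fun j => (1 : A) - c ^ j • u)).prod * Y ^ l * ((1 - u) * Y)
        = ((List.range l).map (fun j => (1 : A) - c ^ j • u)).prod *
            (Y ^ l * (1 - u)) * Y := by rw [mul_assoc, mul_assoc, mul_assoc]
      _ = ((List.range l).map (fun j => (1 : A) - c ^ j • u)).prod *
            ((1 - c ^ l • u) * Y ^ l) * Y := by rw [hY]
      _ = ((List.range l).map (fun j => (1 : A) - c ^ j • u)).prod *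
            (1 - c ^ l • u) * (Y ^ l * Y) := by rw [mul_assoc, mul_assoc, mul_assoc]
      _ = ((List.range l).map (fun j => (1 : A) - c ^ j • u)).prod *
            (1 - c ^ l • u) * Y ^ (l + 1) := by rw [pow_succ]

lemma prodRight {X v : A} {c : ℂ} (h : v * X = c • (X * v)) (l : ℕ) :
    (X * (1 - c • v)) ^ l =
      X ^ l * ((List.range l).map (fun j => (1 : A) - c ^ (j + 1) • v)).prod := by
  induction l with
  | zero => simp
  | succ l ih =>
    rw [pow_succ' (X * (1 - c • v)), ih, List.range_succ, List.map_append, List.prod_append]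
    simp only [List.map_cons, List.map_nil, List.prod_cons, List.prod_nil, mul_one]
    have key : (1 - c • v) * X ^ l = X ^ l * (1 - c ^ (l + 1) • v) := by
      rw [sub_mul, mul_sub, one_mul, mul_one, smul_mul_assoc, qcPowRight h l, smul_smul,
        mul_smul_comm, ← pow_succ']
    simp only [← mul_assoc]
    rw [mul_assoc X (1 - c • v) (X ^ l), key, ← mul_assoc, ← pow_succ' X,
      mul_assoc (X ^ (l + 1)), ← prodFacComm, ← mul_assoc]

end Aux

/-- **Product of powers of the invariant kernels.**
In the setting of the quantum principal homogeneous spaces with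
`t₁₂, t₂₁, τ₁₂, τ₂₁` invertible, with `z = q t₁₂⁻¹ t₁₁`, `z* = t₂₂ t₂₁⁻¹`,
`ζ = q τ₁₁ τ₁₂⁻¹`, `ζ* = τ₂₁⁻¹ τ₂₂`, `x = -q t₁₂ t₂₁`, `ξ = -q τ₁₂ τ₂₁`,
one has for every `l ∈ ℤ₊`:
`k₂₂^l k₁₁^l = (z* ζ; q⁻²)_l (t₁₂ t₂₁)^l (τ₁₂ τ₂₁)^l (q⁻² z ζ*; q⁻²)_l` and
`k₂₂^l k₁₁^l = q^{-2l} ξ^l (q² z* ζ; q²)_l (z ζ*; q²)_l x^l`,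
where `(c; p)_n = ∏_{j=0}^{n-1} (1 - pʲ c)` (pairwise commuting factors,
written as an ordered list product). -/
theorem kernel_power_product
    {A : Type*} [Ring A] [Algebra ℂ A] (q : ℝ) (hq0 : 0 < q) (hq1 : q < 1)
    (t₁₁ t₁₂ t₂₁ t₂₂ τ₁₁ τ₁₂ τ₂₁ τ₂₂ : A)
    -- (i) every tᵢⱼ commutes with every τₖₗ:
    (hcomm : ∀ s ∈ ({t₁₁, t₁₂, t₂₁, t₂₂} : Set A),
      ∀ σ ∈ ({τ₁₁, τ₁₂, τ₂₁, τ₂₂} : Set A), s * σ = σ * s)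
    -- (ii) the τ's satisfy the quantum SL₂ relations:
    (hτ1 : τ₁₁ * τ₁₂ = (q : ℂ) • (τ₁₂ * τ₁₁)) (hτ2 : τ₂₁ * τ₂₂ = (q : ℂ) • (τ₂₂ * τ₂₁))
    (hτ3 : τ₁₁ * τ₂₁ = (q : ℂ) • (τ₂₁ * τ₁₁)) (hτ4 : τ₁₂ * τ₂₂ = (q : ℂ) • (τ₂₂ * τ₁₂))
    (hτ5 : τ₁₂ * τ₂₁ = τ₂₁ * τ₁₂)
    (hτ6 : τ₁₁ * τ₂₂ - τ₂₂ * τ₁₁ = ((q : ℂ) - (q : ℂ)⁻¹) • (τ₁₂ * τ₂₁))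
    -- (iii) the t's satisfy the opposite quantum SL₂ relations:
    (ht1 : t₁₂ * t₁₁ = (q : ℂ) • (t₁₁ * t₁₂)) (ht2 : t₂₂ * t₂₁ = (q : ℂ) • (t₂₁ * t₂₂))
    (ht3 : t₂₁ * t₁₁ = (q : ℂ) • (t₁₁ * t₂₁)) (ht4 : t₂₂ * t₁₂ = (q : ℂ) • (t₁₂ * t₂₂))
    (ht5 : t₂₁ * t₁₂ = t₁₂ * t₂₁)
    (ht6 : t₂₂ * t₁₁ - t₁₁ * t₂₂ = ((q : ℂ) - (q : ℂ)⁻¹) • (t₂₁ * t₁₂))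
    -- (iv) t₁₂, t₂₁, τ₁₂, τ₂₁ are invertible, with two-sided inverses:
    (s₁₂ s₂₁ σ₁₂ σ₂₁ : A)
    (hs12 : t₁₂ * s₁₂ = 1 ∧ s₁₂ * t₁₂ = 1) (hs21 : t₂₁ * s₂₁ = 1 ∧ s₂₁ * t₂₁ = 1)
    (hσ12 : τ₁₂ * σ₁₂ = 1 ∧ σ₁₂ * τ₁₂ = 1) (hσ21 : τ₂₁ * σ₂₁ = 1 ∧ σ₂₁ * τ₂₁ = 1)
    -- the elements z, z*, ζ, ζ*:
    (z zst ζ ζst : A)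
    (hz : z = (q : ℂ) • (s₁₂ * t₁₁)) (hzst : zst = t₂₂ * s₂₁)
    (hζ : ζ = (q : ℂ) • (τ₁₁ * σ₁₂)) (hζst : ζst = σ₂₁ * τ₂₂)
    -- the invariant kernels:
    (k₁₁ k₂₂ : A)
    (hk11 : k₁₁ = t₁₁ * τ₂₂ - (q : ℂ) • (t₁₂ * τ₂₁))
    (hk22 : k₂₂ = -(q : ℂ)⁻¹ • (t₂₁ * τ₁₂) + t₂₂ * τ₁₁)
    -- the elements x and ξ:
    (x ξ : A)
    (hx : x = (-(q : ℂ)) • (t₁₂ * t₂₁)) (hξ : ξ = (-(q : ℂ)) • (τ₁₂ * τ₂₁))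
    (l : ℕ) :
    k₂₂ ^ l * k₁₁ ^ l =
      ((List.range l).map
          (fun j => 1 - ((q : ℂ) ^ (-(2 * (j : ℤ)))) • (zst * ζ))).prod *
        (t₁₂ * t₂₁) ^ l * (τ₁₂ * τ₂₁) ^ l *
        ((List.range l).map
          (fun j => 1 - ((q : ℂ) ^ (-(2 * ((j : ℤ) + 1)))) • (z * ζst))).prod ∧
    k₂₂ ^ l * k₁₁ ^ l =
      ((q : ℂ) ^ (-(2 * (l : ℤ)))) •
        (ξ ^ l *
          ((List.range l).map
            (fun j => 1 - ((q : ℂ) ^ (2 * (j + 1))) • (zst * ζ))).prod *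
          ((List.range l).map
            (fun j => 1 - ((q : ℂ) ^ (2 * j)) • (z * ζst))).prod *
          x ^ l) := by
  have hQ : (q : ℂ) ≠ 0 := by
    simpa using ne_of_gt hq0
  have hQQ : (q : ℂ) * (q : ℂ) ≠ 0 := mul_ne_zero hQ hQ
  -- basic cross commutation facts
  have Ca : Commute t₂₁ τ₁₁ := hcomm t₂₁ (by simp) τ₁₁ (by simp)
  have Cb : Commute t₂₁ τ₁₂ := hcomm t₂₁ (by simp) τ₁₂ (by simp)
  have Cc : Commute t₂₁ τ₂₁ := hcomm t₂₁ (by simp) τ₂₁ (by simp)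
  have Cd : Commute t₂₁ τ₂₂ := hcomm t₂₁ (by simp) τ₂₂ (by simp)
  have Ce : Commute t₁₂ τ₂₁ := hcomm t₁₂ (by simp) τ₂₁ (by simp)
  have Cf : Commute t₁₂ τ₂₂ := hcomm t₁₂ (by simp) τ₂₂ (by simp)
  have Cg : Commute t₂₂ τ₁₂ := hcomm t₂₂ (by simp) τ₁₂ (by simp)
  have Ch : Commute t₂₂ τ₂₁ := hcomm t₂₂ (by simp) τ₂₁ (by simp)
  have Ci : Commute t₁₁ τ₂₁ := hcomm t₁₁ (by simp) τ₂₁ (by simp)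
  have Cj : Commute t₁₂ τ₁₂ := hcomm t₁₂ (by simp) τ₁₂ (by simp)
  -- commutation with the inverses
  have Cσ12_t21 : Commute σ₁₂ t₂₁ := commConj Cb.eq hσ12.1 hσ12.2
  have Cσ21_t21 : Commute σ₂₁ t₂₁ := commConj Cc.eq hσ21.1 hσ21.2
  have Cσ21_t12 : Commute σ₂₁ t₁₂ := commConj Ce.eq hσ21.1 hσ21.2
  have Cσ21_t22 : Commute σ₂₁ t₂₂ := commConj Ch.eq hσ21.1 hσ21.2
  have Cσ21_t11 : Commute σ₂₁ t₁₁ := commConj Ci.eq hσ21.1 hσ21.2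
  have Cs21_τ12 : Commute s₂₁ τ₁₂ := commConj Cb.symm.eq hs21.1 hs21.2
  have Cs12_τ21 : Commute s₁₂ τ₂₁ := commConj Ce.symm.eq hs12.1 hs12.2
  have Cs21_σ21 : Commute s₂₁ σ₂₁ := commConj Cσ21_t21.eq hs21.1 hs21.2
  have Cs12_σ21 : Commute s₁₂ σ₂₁ := commConj Cσ21_t12.eq hs12.1 hs12.2
  have Cσ21_τ12 : Commute σ₂₁ τ₁₂ := commConj hτ5 hσ21.1 hσ21.2
  have Cσ12_σ21 : Commute σ₁₂ σ₂₁ := commConj Cσ21_τ12.eq hσ12.1 hσ12.2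
  have Cs12_t21 : Commute s₁₂ t₂₁ := commConj ht5 hs12.1 hs12.2
  have Cσ21_τ21 : Commute σ₂₁ τ₂₁ := by
    show σ₂₁ * τ₂₁ = τ₂₁ * σ₂₁
    rw [hσ21.2, hσ21.1]
  -- q-commutation with the inverses
  have qσ21_τ11 : σ₂₁ * τ₁₁ = (q : ℂ) • (τ₁₁ * σ₂₁) := qcConj hτ3 hσ21.1 hσ21.2
  have qσ21_τ22 : σ₂₁ * τ₂₂ = (q : ℂ)⁻¹ • (τ₂₂ * σ₂₁) := qcConj (qcSymm hτ2 hQ) hσ21.1 hσ21.2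
  have qt11_t12 : t₁₁ * t₁₂ = (q : ℂ)⁻¹ • (t₁₂ * t₁₁) := qcSymm ht1 hQ
  have qt21_t22 : t₂₁ * t₂₂ = (q : ℂ)⁻¹ • (t₂₂ * t₂₁) := qcSymm ht2 hQ
  have qτ12_τ11 : τ₁₂ * τ₁₁ = (q : ℂ)⁻¹ • (τ₁₁ * τ₁₂) := qcSymm hτ1 hQ
  have qτ22_τ21 : τ₂₂ * τ₂₁ = (q : ℂ)⁻¹ • (τ₂₁ * τ₂₂) := qcSymm hτ2 hQ
  -- composite commutation facts
  have Cζ_t21 : Commute ζ t₂₁ := by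
    rw [hζ]; exact ((Ca.symm.mul_left Cσ12_t21)).smul_left _
  have Czst_τ12 : Commute zst τ₁₂ := by
    rw [hzst]; exact Cg.mul_left Cs21_τ12
  have Cζst_t12 : Commute ζst t₁₂ := by
    rw [hζst]; exact Cσ21_t12.mul_left Cf.symm
  have Cζst_t21 : Commute ζst t₂₁ := by
    rw [hζst]; exact Cσ21_t21.mul_left Cd.symm
  have Cz_τ21 : Commute z τ₂₁ := by
    rw [hz]; exact (Cs12_τ21.mul_left Ci).smul_left _
  have Czst_σ21 : Commute zst σ₂₁ := by
    rw [hzst]; exact Cσ21_t22.symm.mul_left Cs21_σ21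
  have Cz_σ21 : Commute z σ₂₁ := by
    rw [hz]; exact (Cs12_σ21.mul_left Cσ21_t11.symm).smul_left _
  -- word computations
  have e1 : zst * t₂₁ = t₂₂ := by rw [hzst, mul_assoc, hs21.2, mul_one]
  have e2 : t₂₁ * zst = (q : ℂ)⁻¹ • t₂₂ := by
    rw [hzst, ← mul_assoc, qt21_t22, smul_mul_assoc, mul_assoc, hs21.1, mul_one]
  have e3 : ζ * τ₁₂ = (q : ℂ) • τ₁₁ := by
    rw [hζ, smul_mul_assoc, mul_assoc, hσ12.2, mul_one]
  have e4 : τ₁₂ * ζ = τ₁₁ := by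
    rw [hζ, mul_smul_comm, ← mul_assoc, qτ12_τ11, smul_mul_assoc, smul_smul,
      mul_inv_cancel₀ hQ, one_smul, mul_assoc, hσ12.1, mul_one]
  have e5 : z * t₁₂ = t₁₁ := by
    rw [hz, smul_mul_assoc, mul_assoc, qt11_t12, mul_smul_comm, smul_smul,
      mul_inv_cancel₀ hQ, one_smul, ← mul_assoc, hs12.2, one_mul]
  have e6 : t₁₂ * z = (q : ℂ) • t₁₁ := by
    rw [hz, mul_smul_comm, ← mul_assoc, hs12.1, one_mul]
  have e7 : ζst * τ₂₁ = (q : ℂ)⁻¹ • τ₂₂ := by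
    rw [hζst, mul_assoc, qτ22_τ21, mul_smul_comm, ← mul_assoc, hσ21.2, one_mul]
  have e8 : τ₂₁ * ζst = τ₂₂ := by rw [hζst, ← mul_assoc, hσ21.1, one_mul]
  -- the four kernel words
  have h_uY : (zst * ζ) * (t₂₁ * τ₁₂) = (q : ℂ) • (t₂₂ * τ₁₁) := by
    rw [mul_assoc, ← mul_assoc ζ t₂₁ τ₁₂, Cζ_t21.eq, mul_assoc t₂₁ ζ τ₁₂, e3,
      mul_smul_comm, mul_smul_comm, ← mul_assoc, e1]
  have h_Yu : (t₂₁ * τ₁₂) * (zst * ζ) = (q : ℂ)⁻¹ • (t₂₂ * τ₁₁) := by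
    rw [mul_assoc, ← mul_assoc τ₁₂ zst ζ, Czst_τ12.symm.eq, mul_assoc zst τ₁₂ ζ, e4,
      ← mul_assoc, e2, smul_mul_assoc]
  have h_Xv : (t₁₂ * τ₂₁) * (z * ζst) = (q : ℂ) • (t₁₁ * τ₂₂) := by
    rw [mul_assoc, ← mul_assoc τ₂₁ z ζst, Cz_τ21.symm.eq, mul_assoc z τ₂₁ ζst, e8,
      ← mul_assoc, e6, smul_mul_assoc]
  have h_vX : (z * ζst) * (t₁₂ * τ₂₁) = (q : ℂ)⁻¹ • (t₁₁ * τ₂₂) := by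
    rw [mul_assoc, ← mul_assoc ζst t₁₂ τ₂₁, Cζst_t12.eq, mul_assoc t₁₂ ζst τ₂₁, e7,
      mul_smul_comm, mul_smul_comm, ← mul_assoc, e5]
  -- main q-commutations
  have q_uY : (zst * ζ) * (t₂₁ * τ₁₂) = ((q:ℂ) * (q:ℂ)) • ((t₂₁ * τ₁₂) * (zst * ζ)) := by
    rw [h_uY, h_Yu, smul_smul, mul_assoc, mul_inv_cancel₀ hQ, mul_one]
  have q_Yu : (t₂₁ * τ₁₂) * (zst * ζ) = ((q:ℂ) * (q:ℂ))⁻¹ • ((zst * ζ) * (t₂₁ * τ₁₂)) :=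
    qcSymm q_uY hQQ
  have q_Xv : (t₁₂ * τ₂₁) * (z * ζst) = ((q:ℂ) * (q:ℂ)) • ((z * ζst) * (t₁₂ * τ₂₁)) := by
    rw [h_Xv, h_vX, smul_smul, mul_assoc, mul_inv_cancel₀ hQ, mul_one]
  have q_vX : (z * ζst) * (t₁₂ * τ₂₁) = ((q:ℂ) * (q:ℂ))⁻¹ • ((t₁₂ * τ₂₁) * (z * ζst)) :=
    qcSymm q_Xv hQQ
  -- factorizations of the kernels
  have hk22A : k₂₂ = (-(q:ℂ)⁻¹) • ((1 - zst * ζ) * (t₂₁ * τ₁₂)) := by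
    rw [hk22, sub_mul, one_mul, h_uY]
    match_scalars <;> field_simp
  have hk22B : k₂₂ = (-(q:ℂ)⁻¹) • ((t₂₁ * τ₁₂) * (1 - ((q:ℂ) * (q:ℂ)) • (zst * ζ))) := by
    rw [hk22, mul_sub, mul_one, mul_smul_comm, h_Yu]
    match_scalars <;> field_simp
  have hk11A : k₁₁ = (-(q:ℂ)) • ((t₁₂ * τ₂₁) * (1 - ((q:ℂ) * (q:ℂ))⁻¹ • (z * ζst))) := by
    rw [hk11, mul_sub, mul_one, mul_smul_comm, h_Xv]
    match_scalars <;> field_simp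
  have hk11B : k₁₁ = (-(q:ℂ)) • ((1 - z * ζst) * (t₁₂ * τ₂₁)) := by
    rw [hk11, sub_mul, one_mul, h_vX]
    match_scalars <;> field_simp
  -- commutation of the big factors
  have hYX : (t₂₁ * τ₁₂) * (t₁₂ * τ₂₁) = (t₁₂ * t₂₁) * (τ₁₂ * τ₂₁) := by
    rw [mul_assoc, ← mul_assoc τ₁₂ t₁₂ τ₂₁, ← Cj.eq, mul_assoc t₁₂ τ₁₂ τ₂₁, ← mul_assoc, ht5]
  have hXY : (t₁₂ * τ₂₁) * (t₂₁ * τ₁₂) = (t₁₂ * t₂₁) * (τ₁₂ * τ₂₁) := by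
    rw [mul_assoc, ← mul_assoc τ₂₁ t₂₁ τ₁₂, ← Cc.eq, mul_assoc t₂₁ τ₂₁ τ₁₂, ← mul_assoc, ← hτ5]
  have CYX : Commute (t₂₁ * τ₁₂) (t₁₂ * τ₂₁) := hYX.trans hXY.symm
  have CTS : Commute (t₁₂ * t₂₁) (τ₁₂ * τ₂₁) :=
    (Cj.mul_right Ce).mul_left (Cb.mul_right Cc)
  -- the auxiliary invertible central-ish element g = t₂₁ σ₂₁
  have hgS : (t₂₁ * σ₂₁) * (τ₁₂ * τ₂₁) = t₂₁ * τ₁₂ := by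
    rw [mul_assoc, ← mul_assoc σ₂₁ τ₁₂ τ₂₁, Cσ21_τ12.eq, mul_assoc τ₁₂ σ₂₁ τ₂₁, hσ21.2, mul_one]
  have hgX : (t₂₁ * σ₂₁) * (t₁₂ * τ₂₁) = t₁₂ * t₂₁ := by
    rw [mul_assoc, ← mul_assoc σ₂₁ t₁₂ τ₂₁, Cσ21_t12.eq, mul_assoc t₁₂ σ₂₁ τ₂₁, hσ21.2,
      mul_one, ht5]
  have CgS : Commute (t₂₁ * σ₂₁) (τ₁₂ * τ₂₁) :=
    (Cb.mul_right Cc).mul_left (Cσ21_τ12.mul_right Cσ21_τ21)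
  have Ct21_t12 : Commute t₂₁ t₁₂ := ht5
  have CgX : Commute (t₂₁ * σ₂₁) (t₁₂ * τ₂₁) :=
    (Ct21_t12.mul_right Cc).mul_left (Cσ21_t12.mul_right Cσ21_τ21)
  -- g commutes with u = zst ζ and v = z ζst
  have qzst_t21 : zst * t₂₁ = (q:ℂ) • (t₂₁ * zst) := by
    rw [e1, e2, smul_smul, mul_inv_cancel₀ hQ, one_smul]
  have qσ21_ζ : σ₂₁ * ζ = (q:ℂ) • (ζ * σ₂₁) := by
    rw [hζ]
    simpa using qcSmulRight (q:ℂ) (qcMulLeft qσ21_τ11 (qcOfComm Cσ12_σ21.symm.eq))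
  have qσ21_ζst : σ₂₁ * ζst = (q:ℂ)⁻¹ • (ζst * σ₂₁) := by
    rw [hζst]
    simpa using qcMulLeft (qcOfComm (rfl : σ₂₁ * σ₂₁ = σ₂₁ * σ₂₁)) qσ21_τ22
  have qt21_z : t₂₁ * z = (q:ℂ) • (z * t₂₁) := by
    rw [hz]
    simpa using qcSmulRight (q:ℂ) (qcMulLeft (qcOfComm Cs12_t21.symm.eq) ht3)
  have q_ut21 : (zst * ζ) * t₂₁ = ((q:ℂ) * 1) • (t₂₁ * (zst * ζ)) :=
    qcMulRight qzst_t21 (qcOfComm Cζ_t21.eq)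
  have q_t21u : t₂₁ * (zst * ζ) = ((q:ℂ) * 1)⁻¹ • ((zst * ζ) * t₂₁) :=
    qcSymm q_ut21 (by simpa using hQ)
  have q_σ21u : σ₂₁ * (zst * ζ) = ((1:ℂ) * (q:ℂ)) • ((zst * ζ) * σ₂₁) :=
    qcMulLeft (qcOfComm Czst_σ21.symm.eq) qσ21_ζ
  have Cg_u : Commute (t₂₁ * σ₂₁) (zst * ζ) := by
    have e := qcMulRight q_t21u q_σ21u
    rw [show ((q:ℂ) * 1)⁻¹ * ((1:ℂ) * (q:ℂ)) = 1 by field_simp, one_smul] at e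
    exact e
  have q_t21v : t₂₁ * (z * ζst) = ((q:ℂ) * 1) • ((z * ζst) * t₂₁) :=
    qcMulLeft qt21_z (qcOfComm Cζst_t21.symm.eq)
  have q_σ21v : σ₂₁ * (z * ζst) = ((1:ℂ) * (q:ℂ)⁻¹) • ((z * ζst) * σ₂₁) :=
    qcMulLeft (qcOfComm Cz_σ21.symm.eq) qσ21_ζst
  have Cg_v : Commute (t₂₁ * σ₂₁) (z * ζst) := by
    have e := qcMulRight q_t21v q_σ21v
    rw [show ((q:ℂ) * 1) * ((1:ℂ) * (q:ℂ)⁻¹) = 1 by field_simp, one_smul] at e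
    exact e
  -- scalar coefficient lemmas
  have hc1 : ∀ j : ℕ, (q:ℂ) ^ (-(2 * (j : ℤ))) = (((q:ℂ) * (q:ℂ))⁻¹) ^ j := by
    intro j
    induction j with
    | zero => norm_num
    | succ j ih =>
      have h : (-(2 * ((j+1:ℕ) : ℤ))) = (-(2 * (j:ℤ))) + (-2 : ℤ) := by push_cast; ring
      rw [h, zpow_add₀ hQ, ih, pow_succ]
      congr 1
      rw [show (q:ℂ) * (q:ℂ) = (q:ℂ) ^ (2:ℕ) from (sq _).symm, ← zpow_natCast, ← zpow_neg]
      norm_num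
  have hc2 : ∀ j : ℕ, (q:ℂ) ^ (-(2 * ((j : ℤ) + 1))) = (((q:ℂ) * (q:ℂ))⁻¹) ^ (j + 1) := by
    intro j
    have h := hc1 (j + 1)
    rw [show (((j+1:ℕ)) : ℤ) = (j:ℤ) + 1 by push_cast; ring] at h
    exact h
  have hc3 : ∀ j : ℕ, (q:ℂ) ^ (2 * (j + 1)) = ((q:ℂ) * (q:ℂ)) ^ (j + 1) := by
    intro j; rw [pow_mul, pow_two]
  have hc4 : ∀ j : ℕ, (q:ℂ) ^ (2 * j) = ((q:ℂ) * (q:ℂ)) ^ j := by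
    intro j; rw [pow_mul, pow_two]
  have hneg : ((-(q:ℂ)⁻¹) ^ l) * ((-(q:ℂ)) ^ l) = 1 := by
    rw [← mul_pow, neg_mul_neg, inv_mul_cancel₀ hQ, one_pow]
  -- list rewrites
  have hcast : ∀ L : List ℕ, ((L : List ℤ)) = L.map (fun a : ℕ => (a : ℤ)) := by
    intro L
    induction L with
    | nil => rfl
    | cons a t ih => simp only [List.map_cons, ← ih]; rfl
  have hL1 : (List.range l).map (fun j => (1:A) - ((q : ℂ) ^ (-(2 * (j : ℤ)))) • (zst * ζ)) =
      (List.range l).map (fun j => (1:A) - (((q:ℂ) * (q:ℂ))⁻¹) ^ j • (zst * ζ)) := by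
    rw [hcast, List.map_map]
    apply List.map_congr_left
    intro j _
    simp only [Function.comp]
    rw [hc1 j]
  have hL2 : (List.range l).map
        (fun j => (1:A) - ((q : ℂ) ^ (-(2 * ((j : ℤ) + 1)))) • (z * ζst)) =
      (List.range l).map (fun j => (1:A) - (((q:ℂ) * (q:ℂ))⁻¹) ^ (j + 1) • (z * ζst)) := by
    rw [hcast, List.map_map]
    apply List.map_congr_left
    intro j _
    simp only [Function.comp]
    rw [hc2 j]
  have hL3 : (List.range l).map (fun j => (1:A) - ((q : ℂ) ^ (2 * (j + 1))) • (zst * ζ)) =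
      (List.range l).map (fun j => (1:A) - ((q:ℂ) * (q:ℂ)) ^ (j + 1) • (zst * ζ)) := by
    apply List.map_congr_left
    intro j _
    rw [hc3 j]
  have hL4 : (List.range l).map (fun j => (1:A) - ((q : ℂ) ^ (2 * j)) • (z * ζst)) =
      (List.range l).map (fun j => (1:A) - ((q:ℂ) * (q:ℂ)) ^ j • (z * ζst)) := by
    apply List.map_congr_left
    intro j _
    rw [hc4 j]
  constructor
  · -- first identity
    rw [hL1, hL2, hk22A, hk11A, smul_pow, smul_pow, prodLeft q_Yu l, prodRight q_vX l,
      smul_mul_assoc, mul_smul_comm, smul_smul, hneg, one_smul]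
    -- now: P1 * (t₂₁τ₁₂)^l * ((t₁₂τ₂₁)^l * P2) = P1 * (t₁₂t₂₁)^l * (τ₁₂τ₂₁)^l * P2
    have hmid : (t₂₁ * τ₁₂) ^ l * (t₁₂ * τ₂₁) ^ l = (t₁₂ * t₂₁) ^ l * (τ₁₂ * τ₂₁) ^ l := by
      rw [← CYX.mul_pow, hYX, CTS.mul_pow]
    calc ((List.range l).map (fun j => (1:A) - (((q:ℂ)*(q:ℂ))⁻¹) ^ j • (zst * ζ))).prod *
          (t₂₁ * τ₁₂) ^ l *
          ((t₁₂ * τ₂₁) ^ l *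
            ((List.range l).map
              (fun j => (1:A) - (((q:ℂ)*(q:ℂ))⁻¹) ^ (j+1) • (z * ζst))).prod)
        = ((List.range l).map (fun j => (1:A) - (((q:ℂ)*(q:ℂ))⁻¹) ^ j • (zst * ζ))).prod *
            ((t₂₁ * τ₁₂) ^ l * (t₁₂ * τ₂₁) ^ l) *
            ((List.range l).map
              (fun j => (1:A) - (((q:ℂ)*(q:ℂ))⁻¹) ^ (j+1) • (z * ζst))).prod := by
          simp only [mul_assoc]
      _ = ((List.range l).map (fun j => (1:A) - (((q:ℂ)*(q:ℂ))⁻¹) ^ j • (zst * ζ))).prod *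
            ((t₁₂ * t₂₁) ^ l * (τ₁₂ * τ₂₁) ^ l) *
            ((List.range l).map
              (fun j => (1:A) - (((q:ℂ)*(q:ℂ))⁻¹) ^ (j+1) • (z * ζst))).prod := by
          rw [hmid]
      _ = ((List.range l).map (fun j => (1:A) - (((q:ℂ)*(q:ℂ))⁻¹) ^ j • (zst * ζ))).prod *
            (t₁₂ * t₂₁) ^ l * (τ₁₂ * τ₂₁) ^ l *
            ((List.range l).map
              (fun j => (1:A) - (((q:ℂ)*(q:ℂ))⁻¹) ^ (j+1) • (z * ζst))).prod := by
          simp only [mul_assoc]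
  · -- second identity
    rw [hL3, hL4, hξ, hx, smul_pow, smul_pow]
    rw [hk22B, hk11B, smul_pow, smul_pow, prodRight q_uY l, prodLeft q_Xv l,
      smul_mul_assoc, mul_smul_comm, smul_smul, hneg, one_smul]
    -- LHS now: (t₂₁τ₁₂)^l * P3 * (P4 * (t₁₂τ₂₁)^l)
    -- RHS: q^(-2l) • ((-q)^l • (τ₁₂τ₂₁)^l * P3 * P4 * ((-q)^l • (t₁₂t₂₁)^l))
    have hscal : (q:ℂ) ^ (-(2 * (l : ℤ))) * ((-(q:ℂ)) ^ l * (-(q:ℂ)) ^ l) = 1 := by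
      rw [hc1 l, ← mul_pow, neg_mul_neg, ← mul_pow, inv_mul_cancel₀ hQQ, one_pow]
    have CgP3 : Commute ((t₂₁ * σ₂₁) ^ l)
        (((List.range l).map
          (fun j => (1:A) - ((q:ℂ)*(q:ℂ)) ^ (j+1) • (zst * ζ))).prod) :=
      (commuteProd _ _ Cg_u _ l).pow_left l
    have CgP4 : Commute ((t₂₁ * σ₂₁) ^ l)
        (((List.range l).map
          (fun j => (1:A) - ((q:ℂ)*(q:ℂ)) ^ j • (z * ζst))).prod) :=
      (commuteProd _ _ Cg_v _ l).pow_left l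
    have hYpow : (t₂₁ * τ₁₂) ^ l = (t₂₁ * σ₂₁) ^ l * (τ₁₂ * τ₂₁) ^ l := by
      rw [← CgS.mul_pow, hgS]
    have hTpow : (t₂₁ * σ₂₁) ^ l * (t₁₂ * τ₂₁) ^ l = (t₁₂ * t₂₁) ^ l := by
      rw [← CgX.mul_pow, hgX]
    have hscal2 : ((q:ℂ) ^ (-(2 * (l : ℤ))) * (-(q:ℂ)) ^ l) * (-(q:ℂ)) ^ l = 1 := by
      rw [mul_assoc, ← mul_pow, neg_mul_neg, hc1 l, ← mul_pow, inv_mul_cancel₀ hQQ, one_pow]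
    rw [hYpow]
    conv_rhs => rw [smul_mul_assoc, smul_mul_assoc, smul_mul_assoc, mul_smul_comm, smul_smul,
      smul_smul, hscal2, one_smul]
    simp only [mul_assoc]
    rw [← mul_assoc ((t₂₁ * σ₂₁) ^ l) ((τ₁₂ * τ₂₁) ^ l), (CgS.pow_pow l l).eq,
      mul_assoc ((τ₁₂ * τ₂₁) ^ l)]
    rw [← mul_assoc ((t₂₁ * σ₂₁) ^ l), CgP3.eq, mul_assoc]
    rw [← mul_assoc ((t₂₁ * σ₂₁) ^ l), CgP4.eq, mul_assoc]
    rw [hTpow]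
end

section
/- In the setting of the quantum principal homogeneous spaces with t₁₂, t₂₁, τ₁₂, τ₂₁ invertible, set z = q·t₁₂⁻¹t₁₁, z* = t₂₂t₂₁⁻¹, ζ = q·τ₁₁τ₁₂⁻¹, ζ* = τ₂₁⁻¹τ₂₂, x = −q·t₁₂t₂₁, ξ = −q·τ₁₂τ₂₁. Then for every natural number l: k₂₂^l·k₁₁^l = q^{−2l} · ξ^l · (Σ_{j=0}^{l} [(q^{−2l};q²)_j/(q²;q²)_j] · q^{2(l+1)j} · (z*ζ)^j) · (Σ_{m=0}^{l} [(q^{−2l};q²)_m/(q²;q²)_m] · q^{2lm} · (zζ*)^m) · x^l. (The sums may equivalently be taken over all j, m ≥ 0, since (q^{−2l};q²)_j = 0 whenever j > l.) -/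
open Finset
noncomputable section KPSE


variable {A : Type*} [Ring A] [Algebra ℂ A]

def Ncoef (q : ℂ) (l j : ℕ) : ℂ :=
  ∏ i ∈ Finset.range j, (1 - q ^ (-(2 * (l:ℤ))) * q ^ (2 * i))

def Dcoef (q : ℂ) (j : ℕ) : ℂ :=
  ∏ i ∈ Finset.range j, (1 - q ^ (2 * (i + 1)))

def ccoef (q : ℂ) (l j : ℕ) : ℂ := Ncoef q l j / Dcoef q j

def dcoef (q : ℂ) (l m : ℕ) : ℂ := (-1)^l * ccoef q l m * q ^ (2*l*m)

lemma Dcoef_ne_zero {q : ℝ} (hq0 : 0 < q) (hq1 : q < 1) (j : ℕ) : Dcoef (q:ℂ) j ≠ 0 := by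
  rw [Dcoef, Finset.prod_ne_zero_iff]
  intro i _
  have h1 : q ^ (2*(i+1)) < 1 := pow_lt_one₀ hq0.le hq1 (by omega)
  have h2 : ((q:ℂ)) ^ (2*(i+1)) = ((q ^ (2*(i+1)) : ℝ) : ℂ) := by push_cast; ring
  rw [h2, sub_ne_zero]
  intro h
  rw [show (1:ℂ) = ((1:ℝ):ℂ) from by norm_num] at h
  have := Complex.ofReal_inj.mp h
  linarith

lemma Ncoef_top {q : ℂ} (hq : q ≠ 0) (l : ℕ) : Ncoef q l (l+1) = 0 := by
  rw [Ncoef]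
  apply Finset.prod_eq_zero (Finset.self_mem_range_succ l)
  have : q ^ (2*l) = q ^ ((2*l : ℕ) : ℤ) := (zpow_natCast q (2*l)).symm
  rw [this, ← zpow_add₀ hq]
  norm_num

lemma Ncoef_shift {q : ℂ} (hq : q ≠ 0) (l j : ℕ) :
    Ncoef q (l+1) (j+1) = (1 - q ^ (-(2 * ((l:ℤ)+1)))) * Ncoef q l j := by
  rw [Ncoef, Finset.prod_range_succ', mul_comm]
  congr 1
  · push_cast; norm_num
  · rw [Ncoef]
    apply Finset.prod_congr rfl
    intro i _
    congr 1
    rw [← zpow_natCast q (2*(i+1)), ← zpow_natCast q (2*i), ← zpow_add₀ hq, ← zpow_add₀ hq]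
    congr 1
    push_cast; ring

lemma Ncoef_succ (q : ℂ) (l j : ℕ) :
    Ncoef q l (j+1) = Ncoef q l j * (1 - q ^ (-(2 * (l:ℤ))) * q ^ (2*j)) :=
  Finset.prod_range_succ _ _

lemma Dcoef_succ (q : ℂ) (j : ℕ) :
    Dcoef q (j+1) = Dcoef q j * (1 - q ^ (2*(j+1))) :=
  Finset.prod_range_succ _ _

lemma ccoef_rec {q : ℝ} (hq0 : 0 < q) (hq1 : q < 1) (l m : ℕ) :
    ccoef (q:ℂ) (l+1) (m+1) * (q:ℂ)^(2*(m+1)) =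
      ccoef (q:ℂ) l (m+1) - ccoef (q:ℂ) l m := by
  have hQ : (q:ℂ) ≠ 0 := by exact_mod_cast hq0.ne'
  have hD : Dcoef (q:ℂ) m ≠ 0 := Dcoef_ne_zero hq0 hq1 m
  have hD1 : Dcoef (q:ℂ) (m+1) ≠ 0 := Dcoef_ne_zero hq0 hq1 (m+1)
  have key : Ncoef (q:ℂ) (l+1) (m+1) * (q:ℂ)^(2*(m+1)) =
      Ncoef (q:ℂ) l (m+1) - Ncoef (q:ℂ) l m * (1 - (q:ℂ)^(2*(m+1))) := by
    rw [Ncoef_shift hQ, Ncoef_succ]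
    have expo : (q:ℂ) ^ (-(2 * ((l:ℤ)+1))) * (q:ℂ)^(2*(m+1)) =
        (q:ℂ) ^ (-(2*(l:ℤ))) * (q:ℂ)^(2*m) := by
      rw [← zpow_natCast (q:ℂ) (2*(m+1)), ← zpow_natCast (q:ℂ) (2*m),
        ← zpow_add₀ hQ, ← zpow_add₀ hQ]
      congr 1; push_cast; ring
    calc (1 - (q:ℂ) ^ (-(2 * ((l:ℤ)+1)))) * Ncoef (q:ℂ) l m * (q:ℂ)^(2*(m+1))
        = Ncoef (q:ℂ) l m * ((q:ℂ)^(2*(m+1)) - (q:ℂ) ^ (-(2*((l:ℤ)+1))) * (q:ℂ)^(2*(m+1))) := by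
          ring
      _ = Ncoef (q:ℂ) l m * ((q:ℂ)^(2*(m+1)) - (q:ℂ) ^ (-(2*(l:ℤ))) * (q:ℂ)^(2*m)) := by
          rw [expo]
      _ = _ := by ring
  have h1P : (1 - (q:ℂ)^(2*(m+1))) ≠ 0 := by
    intro h; apply hD1; rw [Dcoef_succ, h, mul_zero]
  rw [ccoef, ccoef, ccoef, div_mul_eq_mul_div, key, sub_div]
  congr 1
  rw [Dcoef_succ, show Ncoef (q:ℂ) l m * (1 - (q:ℂ)^(2*(m+1))) / (Dcoef (q:ℂ) m * (1 - (q:ℂ)^(2*(m+1)))) = Ncoef (q:ℂ) l m / Dcoef (q:ℂ) m from mul_div_mul_right _ _ h1P]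

lemma ccoef_zero (q : ℂ) (l : ℕ) : ccoef q l 0 = 1 := by
  simp [ccoef, Ncoef, Dcoef]

lemma dcoef_zero (q : ℂ) (l : ℕ) : dcoef q l 0 = (-1)^l := by
  simp [dcoef, ccoef_zero]

lemma dcoef_top {q : ℂ} (hq : q ≠ 0) (l : ℕ) : dcoef q l (l+1) = 0 := by
  simp [dcoef, ccoef, Ncoef_top hq]

lemma dcoef_rec {q : ℝ} (hq0 : 0 < q) (hq1 : q < 1) (l m : ℕ) :
    dcoef (q:ℂ) (l+1) (m+1) = (q:ℂ)^(2*l) * dcoef (q:ℂ) l m - dcoef (q:ℂ) l (m+1) := by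
  have hrec := ccoef_rec hq0 hq1 l m
  rw [show 2*(m+1) = 2*m + 2 from by ring, pow_add] at hrec
  rw [dcoef, dcoef, dcoef]
  rw [show 2*(l+1)*(m+1) = 2*l*(m+1) + 2*(m+1) from by ring, pow_add,
    show 2*l*(m+1) = 2*l + 2*l*m from by ring, pow_add, pow_succ]
  linear_combination (-((-1:ℂ))^l) * ((q:ℂ)^(2*l) * (q:ℂ)^(2*l*m)) * hrec
variable {A : Type*} [Ring A] [Algebra ℂ A]

def Gf (q : ℂ) (w : A) : ℕ → ℤ → A
  | 0, _ => 1
  | n+1, s => Gf q w n s * (q ^ (s + 2*(n:ℤ)) • w - 1)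

@[simp] lemma Gf_zero (q : ℂ) (w : A) (s : ℤ) : Gf q w 0 s = 1 := rfl
lemma Gf_succ (q : ℂ) (w : A) (n : ℕ) (s : ℤ) :
    Gf q w (n+1) s = Gf q w n s * (q ^ (s + 2*(n:ℤ)) • w - 1) := rfl

lemma fac_comm (μ ν : ℂ) (w : A) : (μ•w-1) * (ν•w-1) = (ν•w-1) * (μ•w-1) := by
  simp only [sub_mul, mul_sub, mul_one, one_mul, smul_mul_smul_comm, smul_smul]
  rw [mul_comm μ ν]
  abel

lemma Gf_comm (q : ℂ) (w : A) (μ : ℂ) : ∀ n s, (μ•w-1) * Gf q w n s = Gf q w n s * (μ•w-1)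
  | 0, s => by simp
  | n+1, s => by
    rw [Gf_succ, ← mul_assoc, Gf_comm q w μ n s, mul_assoc, mul_assoc,
      fac_comm]

lemma Gf_cons (q : ℂ) (w : A) : ∀ n s, Gf q w (n+1) s = (q ^ s • w - 1) * Gf q w n (s+2)
  | 0, s => by simp [Gf_succ]
  | n+1, s => by
    rw [Gf_succ, Gf_cons q w n s, mul_assoc,
      show s + 2*((n+1:ℕ):ℤ) = (s+2) + 2*(n:ℤ) from by push_cast; ring, ← Gf_succ]

lemma pow_swap {c w : A} {μ : ℂ} (h : c * w = μ • (w * c)) :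
    ∀ n, c^n * w = μ^n • (w * c^n)
  | 0 => by simp
  | n+1 => by
    rw [pow_succ, mul_assoc, h, mul_smul_comm, ← mul_assoc, pow_swap h n,
      smul_mul_assoc, smul_smul, mul_assoc, ← pow_succ, pow_succ μ, mul_comm (μ^n)]

lemma pow_swap' {c w : A} {μ : ℂ} (h : w * c = μ • (c * w)) :
    ∀ n, w * c^n = μ^n • (c^n * w)
  | 0 => by simp
  | n+1 => by
    rw [pow_succ, ← mul_assoc, pow_swap' h n, smul_mul_assoc, mul_assoc, h,
      mul_smul_comm, smul_smul, ← mul_assoc, ← pow_succ, pow_succ μ, mul_comm (μ^n)]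

lemma mul_Gf {q : ℂ} (hq : q ≠ 0) {w c : A} {d : ℤ} (h : c * w = q^d • (w * c)) :
    ∀ n s, c * Gf q w n s = Gf q w n (s+d) * c
  | 0, s => by simp
  | n+1, s => by
    have hfac : ∀ t : ℤ, c * (q ^ t • w - 1) = (q ^ (t+d) • w - 1) * c := by
      intro t
      rw [mul_sub, sub_mul, mul_one, one_mul, mul_smul_comm, h, smul_smul,
        ← zpow_add₀ hq, smul_mul_assoc]
    rw [Gf_succ, ← mul_assoc, mul_Gf hq h n s, mul_assoc, hfac, ← mul_assoc,
      show s + 2*(n:ℤ) + d = (s+d) + 2*(n:ℤ) from by ring, ← Gf_succ]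

lemma Gf_mul {q : ℂ} (hq : q ≠ 0) {w c : A} {d : ℤ} (h : w * c = q^d • (c * w)) :
    ∀ n s, Gf q w n s * c = c * Gf q w n (s+d)
  | 0, s => by simp
  | n+1, s => by
    have hfac : ∀ t : ℤ, (q ^ t • w - 1) * c = c * (q ^ (t+d) • w - 1) := by
      intro t
      rw [mul_sub, sub_mul, mul_one, one_mul, smul_mul_assoc, h, smul_smul,
        ← zpow_add₀ hq, mul_smul_comm]
    rw [Gf_succ, mul_assoc, hfac, ← mul_assoc, Gf_mul hq h n s, mul_assoc,
      show s + 2*(n:ℤ) + d = (s+d) + 2*(n:ℤ) from by ring, ← Gf_succ]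

lemma Gf_shift2 {q : ℂ} (hq : q ≠ 0) (w : A) :
    ∀ n s, Gf q w n (s+2) = Gf q ((q^(2:ℤ))•w) n s
  | 0, s => by simp
  | n+1, s => by
    rw [Gf_succ, Gf_succ, Gf_shift2 hq w n s, smul_smul, ← zpow_add₀ hq,
      show s + 2*(n:ℤ) + 2 = s + 2 + 2*(n:ℤ) from by ring]

lemma Gf_sum {q : ℝ} (hq0 : 0 < q) (hq1 : q < 1) (w : A) :
    ∀ l, Gf (q:ℂ) w l 0 = ∑ m ∈ Finset.range (l+1), dcoef (q:ℂ) l m • w^m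
  | 0 => by simp [dcoef_zero]
  | l+1 => by
    have hQ : (q:ℂ) ≠ 0 := by exact_mod_cast hq0.ne'
    rw [Gf_succ, Gf_sum hq0 hq1 w l]
    have hzp : ((q:ℂ)) ^ ((0:ℤ) + 2*(l:ℤ)) = (q:ℂ) ^ (2*l) := by
      rw [zero_add, show (2*(l:ℤ)) = ((2*l : ℕ):ℤ) from by push_cast; ring, zpow_natCast]
    rw [hzp]
    rw [mul_sub, mul_one, Finset.sum_mul]
    have hterm : ∀ m, (dcoef (q:ℂ) l m • w^m) * ((q:ℂ)^(2*l) • w)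
        = ((q:ℂ)^(2*l) * dcoef (q:ℂ) l m) • w^(m+1) := by
      intro m
      rw [smul_mul_smul_comm, ← pow_succ, mul_comm (dcoef (q:ℂ) l m)]
    simp only [hterm]
    -- target : ∑_{m∈range(l+2)} dcoef (l+1) m • w^m
    rw [Finset.sum_range_succ' (fun m => dcoef (q:ℂ) (l+1) m • w^m) (l+1)]
    have hrec : ∀ m, dcoef (q:ℂ) (l+1) (m+1) • w^(m+1)
        = ((q:ℂ)^(2*l) * dcoef (q:ℂ) l m) • w^(m+1) - dcoef (q:ℂ) l (m+1) • w^(m+1) := by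
      intro m
      rw [dcoef_rec hq0 hq1, sub_smul]
    simp only [hrec, dcoef_zero]
    rw [Finset.sum_sub_distrib]
    have hshift : ∑ m ∈ Finset.range (l+1), dcoef (q:ℂ) l (m+1) • w^(m+1)
        = ∑ m ∈ Finset.range (l+1), dcoef (q:ℂ) l m • w^m - dcoef (q:ℂ) l 0 • w^0 := by
      have h2 : ∑ m ∈ Finset.range (l+2), dcoef (q:ℂ) l m • w^m
          = ∑ m ∈ Finset.range (l+1), dcoef (q:ℂ) l (m+1) • w^(m+1) + dcoef (q:ℂ) l 0 • w^0 :=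
        Finset.sum_range_succ' _ _
      have h3 : ∑ m ∈ Finset.range (l+2), dcoef (q:ℂ) l m • w^m
          = ∑ m ∈ Finset.range (l+1), dcoef (q:ℂ) l m • w^m := by
        rw [Finset.sum_range_succ, dcoef_top hQ, zero_smul, add_zero]
      rw [← h3, h2]; ring_nf; abel
    rw [hshift, dcoef_zero q l, pow_succ (-1:ℂ) l]
    simp only [pow_zero, mul_neg_one, neg_smul, pow_succ]
    abel

lemma Gf_sum0 {q : ℝ} (hq0 : 0 < q) (hq1 : q < 1) (w : A) (l : ℕ) :
    Gf (q:ℂ) w l 0 = ((-1:ℂ)^l) •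
      ∑ m ∈ Finset.range (l+1), (ccoef (q:ℂ) l m * (q:ℂ)^(2*l*m)) • w^m := by
  rw [Gf_sum hq0 hq1 w l, Finset.smul_sum]
  apply Finset.sum_congr rfl
  intro m _
  rw [smul_smul, dcoef, mul_assoc]

lemma Gf_sum2 {q : ℝ} (hq0 : 0 < q) (hq1 : q < 1) (w : A) (l : ℕ) :
    Gf (q:ℂ) w l 2 = ((-1:ℂ)^l) •
      ∑ m ∈ Finset.range (l+1), (ccoef (q:ℂ) l m * (q:ℂ)^(2*(l+1)*m)) • w^m := by
  have hQ : (q:ℂ) ≠ 0 := by exact_mod_cast hq0.ne'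
  rw [show (2:ℤ) = 0 + 2 from by ring, Gf_shift2 hQ, Gf_sum hq0 hq1 _ l, Finset.smul_sum]
  apply Finset.sum_congr rfl
  intro m _
  rw [smul_pow, smul_smul, smul_smul]
  congr 1
  rw [show ((q:ℂ)^(2:ℤ)) = (q:ℂ)^(2:ℕ) from by norm_cast, ← pow_mul, dcoef,
    show 2*(l+1)*m = 2*l*m + 2*m from by ring, pow_add]
  ring

lemma inv_comm {τ σ c : A} (h1 : τ * σ = 1) (h2 : σ * τ = 1) (hc : τ * c = c * τ) :
    σ * c = c * σ := by
  calc σ * c = σ * c * (τ * σ) := by rw [h1, mul_one]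
    _ = σ * (c * τ) * σ := by rw [← mul_assoc, mul_assoc σ c τ]
    _ = σ * (τ * c) * σ := by rw [hc]
    _ = c * σ := by rw [← mul_assoc σ τ c, h2, one_mul]

lemma comm_mul_left {a b c : A} (h1 : a*c = c*a) (h2 : b*c = c*b) :
    (a*b)*c = c*(a*b) := by
  rw [mul_assoc, h2, ← mul_assoc, h1, mul_assoc]

lemma mixmul' {T Θ T' Θ' : A} (h : Θ * T' = T' * Θ) :
    (T*Θ)*(T'*Θ') = (T*T')*(Θ*Θ') := by
  rw [mul_assoc T Θ, ← mul_assoc Θ T' Θ', h, mul_assoc T' Θ Θ', ← mul_assoc]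

lemma mixmul'' {Ξ T Θ : A} (h : Ξ * T = T * Ξ) :
    Ξ*(T*Θ) = T*(Ξ*Θ) := by
  rw [← mul_assoc, h, mul_assoc]

lemma zpow_pow' {Q : ℂ} (d : ℤ) (l : ℕ) : (Q^d)^l = Q^(d*l) := by
  rw [← zpow_natCast (Q^d), ← zpow_mul]

lemma Gf_comm1 (q : ℂ) (w : A) (n : ℕ) (s : ℤ) :
    (w-1) * Gf q w n s = Gf q w n s * (w-1) := by
  have h := Gf_comm q w 1 n s
  rwa [one_smul] at h

end KPSE



/-- **Expansion of `k₂₂^l k₁₁^l` (Lemma 6.5 of the paper).**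
In the setting of the quantum principal homogeneous spaces with
`t₁₂, t₂₁, τ₁₂, τ₂₁` invertible, with `z = q t₁₂⁻¹ t₁₁`, `z* = t₂₂ t₂₁⁻¹`,
`ζ = q τ₁₁ τ₁₂⁻¹`, `ζ* = τ₂₁⁻¹ τ₂₂`, `x = -q t₁₂ t₂₁`, `ξ = -q τ₁₂ τ₂₁`,
one has for every `l ∈ ℤ₊`:
`k₂₂^l k₁₁^l = q^{-2l} ξ^l
  (∑_{j=0}^{l} ((q^{-2l};q²)_j/(q²;q²)_j) q^{2(l+1)j} (z* ζ)^j)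
  (∑_{m=0}^{l} ((q^{-2l};q²)_m/(q²;q²)_m) q^{2lm} (z ζ*)^m) x^l`,
where `(a;p)_n = ∏_{i=0}^{n-1} (1 - a pⁱ)` is the (scalar) q-Pochhammer
symbol.  (The sums may equivalently be taken over all `j, m ≥ 0`, since
`(q^{-2l};q²)_j = 0` for `j > l`.) -/
theorem kernel_power_series_expansion
    {A : Type*} [Ring A] [Algebra ℂ A] (q : ℝ) (hq0 : 0 < q) (hq1 : q < 1)
    (t₁₁ t₁₂ t₂₁ t₂₂ τ₁₁ τ₁₂ τ₂₁ τ₂₂ : A)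
    -- (i) every tᵢⱼ commutes with every τₖₗ:
    (hcomm : ∀ s ∈ ({t₁₁, t₁₂, t₂₁, t₂₂} : Set A),
      ∀ σ ∈ ({τ₁₁, τ₁₂, τ₂₁, τ₂₂} : Set A), s * σ = σ * s)
    -- (ii) the τ's satisfy the quantum SL₂ relations:
    (hτ1 : τ₁₁ * τ₁₂ = (q : ℂ) • (τ₁₂ * τ₁₁)) (hτ2 : τ₂₁ * τ₂₂ = (q : ℂ) • (τ₂₂ * τ₂₁))
    (hτ3 : τ₁₁ * τ₂₁ = (q : ℂ) • (τ₂₁ * τ₁₁)) (hτ4 : τ₁₂ * τ₂₂ = (q : ℂ) • (τ₂₂ * τ₁₂))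
    (hτ5 : τ₁₂ * τ₂₁ = τ₂₁ * τ₁₂)
    (hτ6 : τ₁₁ * τ₂₂ - τ₂₂ * τ₁₁ = ((q : ℂ) - (q : ℂ)⁻¹) • (τ₁₂ * τ₂₁))
    -- (iii) the t's satisfy the opposite quantum SL₂ relations:
    (ht1 : t₁₂ * t₁₁ = (q : ℂ) • (t₁₁ * t₁₂)) (ht2 : t₂₂ * t₂₁ = (q : ℂ) • (t₂₁ * t₂₂))
    (ht3 : t₂₁ * t₁₁ = (q : ℂ) • (t₁₁ * t₂₁)) (ht4 : t₂₂ * t₁₂ = (q : ℂ) • (t₁₂ * t₂₂))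
    (ht5 : t₂₁ * t₁₂ = t₁₂ * t₂₁)
    (ht6 : t₂₂ * t₁₁ - t₁₁ * t₂₂ = ((q : ℂ) - (q : ℂ)⁻¹) • (t₂₁ * t₁₂))
    -- (iv) t₁₂, t₂₁, τ₁₂, τ₂₁ are invertible, with two-sided inverses:
    (s₁₂ s₂₁ σ₁₂ σ₂₁ : A)
    (hs12 : t₁₂ * s₁₂ = 1 ∧ s₁₂ * t₁₂ = 1) (hs21 : t₂₁ * s₂₁ = 1 ∧ s₂₁ * t₂₁ = 1)
    (hσ12 : τ₁₂ * σ₁₂ = 1 ∧ σ₁₂ * τ₁₂ = 1) (hσ21 : τ₂₁ * σ₂₁ = 1 ∧ σ₂₁ * τ₂₁ = 1)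
    -- the elements z, z*, ζ, ζ*:
    (z zst ζ ζst : A)
    (hz : z = (q : ℂ) • (s₁₂ * t₁₁)) (hzst : zst = t₂₂ * s₂₁)
    (hζ : ζ = (q : ℂ) • (τ₁₁ * σ₁₂)) (hζst : ζst = σ₂₁ * τ₂₂)
    -- the invariant kernels:
    (k₁₁ k₂₂ : A)
    (hk11 : k₁₁ = t₁₁ * τ₂₂ - (q : ℂ) • (t₁₂ * τ₂₁))
    (hk22 : k₂₂ = -(q : ℂ)⁻¹ • (t₂₁ * τ₁₂) + t₂₂ * τ₁₁)
    -- the elements x and ξ: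
    (x ξ : A)
    (hx : x = (-(q : ℂ)) • (t₁₂ * t₂₁)) (hξ : ξ = (-(q : ℂ)) • (τ₁₂ * τ₂₁))
    (l : ℕ) :
    k₂₂ ^ l * k₁₁ ^ l =
      ((q : ℂ) ^ (-(2 * (l : ℤ)))) •
        (ξ ^ l *
          (∑ j ∈ Finset.range (l + 1),
            ((∏ i ∈ Finset.range j,
                (1 - (q : ℂ) ^ (-(2 * (l : ℤ))) * (q : ℂ) ^ (2 * i))) /
              (∏ i ∈ Finset.range j, (1 - (q : ℂ) ^ (2 * (i + 1)))) *
              (q : ℂ) ^ (2 * (l + 1) * j)) • (zst * ζ) ^ j) *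
          (∑ m ∈ Finset.range (l + 1),
            ((∏ i ∈ Finset.range m,
                (1 - (q : ℂ) ^ (-(2 * (l : ℤ))) * (q : ℂ) ^ (2 * i))) /
              (∏ i ∈ Finset.range m, (1 - (q : ℂ) ^ (2 * (i + 1)))) *
              (q : ℂ) ^ (2 * l * m)) • (z * ζst) ^ m) *
          x ^ l) := by
  have hQ : (q:ℂ) ≠ 0 := by exact_mod_cast hq0.ne'
  -- atom commutations : τ-side * t-side = t-side * τ-side
  have c11_21 : τ₁₁ * t₂₁ = t₂₁ * τ₁₁ := (hcomm t₂₁ (by simp) τ₁₁ (by simp)).symm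
  have c12_11 : τ₁₂ * t₁₁ = t₁₁ * τ₁₂ := (hcomm t₁₁ (by simp) τ₁₂ (by simp)).symm
  have c12_12 : τ₁₂ * t₁₂ = t₁₂ * τ₁₂ := (hcomm t₁₂ (by simp) τ₁₂ (by simp)).symm
  have c12_21 : τ₁₂ * t₂₁ = t₂₁ * τ₁₂ := (hcomm t₂₁ (by simp) τ₁₂ (by simp)).symm
  have c12_22 : τ₁₂ * t₂₂ = t₂₂ * τ₁₂ := (hcomm t₂₂ (by simp) τ₁₂ (by simp)).symm
  have c21_11 : τ₂₁ * t₁₁ = t₁₁ * τ₂₁ := (hcomm t₁₁ (by simp) τ₂₁ (by simp)).symm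
  have c21_12 : τ₂₁ * t₁₂ = t₁₂ * τ₂₁ := (hcomm t₁₂ (by simp) τ₂₁ (by simp)).symm
  have c21_21 : τ₂₁ * t₂₁ = t₂₁ * τ₂₁ := (hcomm t₂₁ (by simp) τ₂₁ (by simp)).symm
  have c22_12 : τ₂₂ * t₁₂ = t₁₂ * τ₂₂ := (hcomm t₁₂ (by simp) τ₂₂ (by simp)).symm
  have c22_21 : τ₂₂ * t₂₁ = t₂₁ * τ₂₂ := (hcomm t₂₁ (by simp) τ₂₂ (by simp)).symm
  have c11_s21 : τ₁₁ * s₂₁ = s₂₁ * τ₁₁ :=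
    (inv_comm hs21.1 hs21.2 (hcomm t₂₁ (by simp) τ₁₁ (by simp))).symm
  have c12_s21 : τ₁₂ * s₂₁ = s₂₁ * τ₁₂ :=
    (inv_comm hs21.1 hs21.2 (hcomm t₂₁ (by simp) τ₁₂ (by simp))).symm
  have c12_s12 : τ₁₂ * s₁₂ = s₁₂ * τ₁₂ :=
    (inv_comm hs12.1 hs12.2 (hcomm t₁₂ (by simp) τ₁₂ (by simp))).symm
  have c21_s12 : τ₂₁ * s₁₂ = s₁₂ * τ₂₁ :=
    (inv_comm hs12.1 hs12.2 (hcomm t₁₂ (by simp) τ₂₁ (by simp))).symm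
  have c22_s12 : τ₂₂ * s₁₂ = s₁₂ * τ₂₂ :=
    (inv_comm hs12.1 hs12.2 (hcomm t₁₂ (by simp) τ₂₂ (by simp))).symm
  have c22_s21 : τ₂₂ * s₂₁ = s₂₁ * τ₂₂ :=
    (inv_comm hs21.1 hs21.2 (hcomm t₂₁ (by simp) τ₂₂ (by simp))).symm
  have cσ12_21 : σ₁₂ * t₂₁ = t₂₁ * σ₁₂ := inv_comm hσ12.1 hσ12.2 c12_21
  have cσ21_11 : σ₂₁ * t₁₁ = t₁₁ * σ₂₁ := inv_comm hσ21.1 hσ21.2 c21_11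
  have cσ21_12 : σ₂₁ * t₁₂ = t₁₂ * σ₂₁ := inv_comm hσ21.1 hσ21.2 c21_12
  have cσ21_21 : σ₂₁ * t₂₁ = t₂₁ * σ₂₁ := inv_comm hσ21.1 hσ21.2 c21_21
  have cσ21_s12 : σ₂₁ * s₁₂ = s₁₂ * σ₂₁ := inv_comm hσ21.1 hσ21.2 c21_s12
  have invsmul : ∀ X Y : A, X = (q:ℂ) • Y → Y = (q:ℂ)⁻¹ • X := by
    intro X Y h
    rw [h, smul_smul, inv_mul_cancel₀ hQ, one_smul]
  -- pure t-side word identities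
  have tA : (t₂₂*s₂₁)*t₂₁ = t₂₂ := by rw [mul_assoc, hs21.2, mul_one]
  have tB : t₂₁*(t₂₂*s₂₁) = (q:ℂ)⁻¹•t₂₂ := by
    have h' : t₂₁*t₂₂ = (q:ℂ)⁻¹•(t₂₂*t₂₁) := invsmul _ _ ht2
    rw [← mul_assoc, h', smul_mul_assoc, mul_assoc, hs21.1, mul_one]
  have tC : (s₁₂*t₁₁)*t₁₂ = (q:ℂ)⁻¹•t₁₁ := by
    have h' : t₁₁*t₁₂ = (q:ℂ)⁻¹•(t₁₂*t₁₁) := invsmul _ _ ht1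
    rw [mul_assoc, h', mul_smul_comm, ← mul_assoc, hs12.2, one_mul]
  have tD : t₁₂*(s₁₂*t₁₁) = t₁₁ := by rw [← mul_assoc, hs12.1, one_mul]
  have tE : t₂₁*(s₁₂*t₁₁) = (q:ℂ)•((s₁₂*t₁₁)*t₂₁) := by
    have hs : s₁₂*t₂₁ = t₂₁*s₁₂ := inv_comm hs12.1 hs12.2 ht5.symm
    rw [← mul_assoc, ← hs, mul_assoc, ht3, mul_smul_comm, ← mul_assoc]
  -- pure τ-side word identities
  have τA : (τ₁₁*σ₁₂)*τ₁₂ = τ₁₁ := by rw [mul_assoc, hσ12.2, mul_one]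
  have τB : τ₁₂*(τ₁₁*σ₁₂) = (q:ℂ)⁻¹•τ₁₁ := by
    have h' : τ₁₂*τ₁₁ = (q:ℂ)⁻¹•(τ₁₁*τ₁₂) := invsmul _ _ hτ1
    rw [← mul_assoc, h', smul_mul_assoc, mul_assoc, hσ12.1, mul_one]
  have τC : (σ₂₁*τ₂₂)*τ₂₁ = (q:ℂ)⁻¹•τ₂₂ := by
    have h' : τ₂₂*τ₂₁ = (q:ℂ)⁻¹•(τ₂₁*τ₂₂) := invsmul _ _ hτ2
    rw [mul_assoc, h', mul_smul_comm, ← mul_assoc, hσ21.2, one_mul]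
  have τD : τ₂₁*(σ₂₁*τ₂₂) = τ₂₂ := by rw [← mul_assoc, hσ21.1, one_mul]
  have τE : τ₁₂*(σ₂₁*τ₂₂) = (q:ℂ)•((σ₂₁*τ₂₂)*τ₁₂) := by
    have hs : σ₂₁*τ₁₂ = τ₁₂*σ₂₁ := inv_comm hσ21.1 hσ21.2 hτ5.symm
    rw [← mul_assoc, ← hs, mul_assoc, hτ4, mul_smul_comm, ← mul_assoc]
  have τF1 : (τ₁₂*τ₂₁)*(σ₂₁*τ₂₂) = (q:ℂ)•(τ₂₂*τ₁₂) := by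
    rw [mul_assoc, ← mul_assoc τ₂₁, hσ21.1, one_mul, hτ4]
  have τF2 : (σ₂₁*τ₂₂)*(τ₁₂*τ₂₁) = (q:ℂ)⁻¹•(τ₂₂*τ₁₂) := by
    have hE' : (σ₂₁*τ₂₂)*τ₁₂ = (q:ℂ)⁻¹•(τ₁₂*(σ₂₁*τ₂₂)) := invsmul _ _ τE
    rw [← mul_assoc, hE', smul_mul_assoc, mul_assoc, τC, mul_smul_comm, smul_smul, hτ4,
      smul_smul]
    congr 1
    field_simp
  have τG1 : (τ₁₁*σ₁₂)*(τ₁₂*τ₂₁) = τ₁₁*τ₂₁ := by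
    rw [← mul_assoc, τA]
  have τG2 : (τ₁₂*τ₂₁)*(τ₁₁*σ₁₂) = ((q:ℂ)⁻¹*(q:ℂ)⁻¹)•(τ₁₁*τ₂₁) := by
    have h3 : τ₂₁*τ₁₁ = (q:ℂ)⁻¹•(τ₁₁*τ₂₁) := invsmul _ _ hτ3
    have hs : τ₂₁*σ₁₂ = σ₁₂*τ₂₁ := (inv_comm hσ12.1 hσ12.2 hτ5).symm
    rw [mul_assoc, ← mul_assoc τ₂₁, h3, smul_mul_assoc, mul_smul_comm,
      mul_assoc τ₁₁, hs, ← mul_assoc τ₁₁, ← mul_assoc, τB, smul_mul_assoc, smul_smul]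
  -- mixed monomial forms
  have hbm : zst * ζ = (q:ℂ)•((t₂₂*s₂₁)*(τ₁₁*σ₁₂)) := by rw [hzst, hζ, mul_smul_comm]
  have ham : z * ζst = (q:ℂ)•((s₁₂*t₁₁)*(σ₂₁*τ₂₂)) := by rw [hz, hζst, smul_mul_assoc]
  -- glue commutations of words
  have gl1 : (τ₁₁*σ₁₂)*t₂₁ = t₂₁*(τ₁₁*σ₁₂) := comm_mul_left c11_21 cσ12_21
  have gl2 : τ₁₂*(t₂₂*s₂₁) = (t₂₂*s₂₁)*τ₁₂ := (comm_mul_left c12_22.symm c12_s21.symm).symm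
  have gl3 : (σ₂₁*τ₂₂)*t₁₂ = t₁₂*(σ₂₁*τ₂₂) := comm_mul_left cσ21_12 c22_12
  have gl4 : τ₂₁*(s₁₂*t₁₁) = (s₁₂*t₁₁)*τ₂₁ := (comm_mul_left c21_s12.symm c21_11.symm).symm
  have gl5 : τ₁₂*(s₁₂*t₁₁) = (s₁₂*t₁₁)*τ₁₂ := (comm_mul_left c12_s12.symm c12_11.symm).symm
  have gl6 : (σ₂₁*τ₂₂)*t₂₁ = t₂₁*(σ₂₁*τ₂₂) := comm_mul_left cσ21_21 c22_21
  have gl7 : (τ₁₂*τ₂₁)*(s₁₂*t₁₁) = (s₁₂*t₁₁)*(τ₁₂*τ₂₁) :=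
    comm_mul_left gl5 gl4
  have c21_22 : τ₂₁ * t₂₂ = t₂₂ * τ₂₁ := (hcomm t₂₂ (by simp) τ₂₁ (by simp)).symm
  have c21_s21 : τ₂₁ * s₂₁ = s₂₁ * τ₂₁ :=
    (inv_comm hs21.1 hs21.2 (hcomm t₂₁ (by simp) τ₂₁ (by simp))).symm
  have gl8 : (τ₁₂*τ₂₁)*(t₂₂*s₂₁) = (t₂₂*s₂₁)*(τ₁₂*τ₂₁) :=
    comm_mul_left gl2 (comm_mul_left c21_22.symm c21_s21.symm).symm
  have gl9 : (τ₁₂*τ₂₁)*(t₁₂*t₂₁) = (t₁₂*t₂₁)*(τ₁₂*τ₂₁) :=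
    comm_mul_left (comm_mul_left c12_12.symm c12_21.symm).symm
      (comm_mul_left c21_12.symm c21_21.symm).symm
  -- the four basic mixed products
  have hbu : (zst*ζ)*(t₂₁*τ₁₂) = (q:ℂ)•(t₂₂*τ₁₁) := by
    rw [hbm, smul_mul_assoc, mixmul' gl1, tA, τA]
  have hub : (t₂₁*τ₁₂)*(zst*ζ) = (q:ℂ)⁻¹•(t₂₂*τ₁₁) := by
    rw [hbm, mul_smul_comm, mixmul' gl2, tB, τB, smul_mul_smul_comm, smul_smul]
    congr 1
    field_simp
  have hav : (z*ζst)*(t₁₂*τ₂₁) = (q:ℂ)⁻¹•(t₁₁*τ₂₂) := by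
    rw [ham, smul_mul_assoc, mixmul' gl3, tC, τC, smul_mul_smul_comm, smul_smul]
    congr 1
    field_simp
  have hva : (t₁₂*τ₂₁)*(z*ζst) = (q:ℂ)•(t₁₁*τ₂₂) := by
    rw [ham, mul_smul_comm, mixmul' gl4, tD, τD]
  have hua : (t₂₁*τ₁₂)*(z*ζst) =
      ((q:ℂ)*((q:ℂ)*(q:ℂ)))•(((s₁₂*t₁₁)*t₂₁)*((σ₂₁*τ₂₂)*τ₁₂)) := by
    rw [ham, mul_smul_comm, mixmul' gl5, tE, τE, smul_mul_smul_comm, smul_smul]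
  have hau : (z*ζst)*(t₂₁*τ₁₂) = (q:ℂ)•(((s₁₂*t₁₁)*t₂₁)*((σ₂₁*τ₂₂)*τ₁₂)) := by
    rw [ham, smul_mul_assoc, mixmul' gl6]
  have haξ : (z*ζst)*ξ = (((q:ℂ)*-(q:ℂ))*(q:ℂ)⁻¹)•((s₁₂*t₁₁)*(τ₂₂*τ₁₂)) := by
    rw [ham, hξ, smul_mul_smul_comm, mul_assoc, τF2, mul_smul_comm, smul_smul]
  have hξa : ξ*(z*ζst) = ((-(q:ℂ)*(q:ℂ))*(q:ℂ))•((s₁₂*t₁₁)*(τ₂₂*τ₁₂)) := by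
    rw [ham, hξ, smul_mul_smul_comm, mixmul'' gl7, τF1, mul_smul_comm, smul_smul]
  have hbξ : (zst*ζ)*ξ = ((q:ℂ)*-(q:ℂ))•((t₂₂*s₂₁)*(τ₁₁*τ₂₁)) := by
    rw [hbm, hξ, smul_mul_smul_comm, mul_assoc, τG1]
  have hξb : ξ*(zst*ζ) = ((-(q:ℂ)*(q:ℂ))*((q:ℂ)⁻¹*(q:ℂ)⁻¹))•((t₂₂*s₂₁)*(τ₁₁*τ₂₁)) := by
    rw [hbm, hξ, smul_mul_smul_comm, mixmul'' gl8, τG2, mul_smul_comm, smul_smul]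
  have huv : (t₂₁*τ₁₂)*(t₁₂*τ₂₁) = (t₁₂*t₂₁)*(τ₁₂*τ₂₁) := by
    rw [mixmul' c12_12, ht5]
  have hvu : (t₁₂*τ₂₁)*(t₂₁*τ₁₂) = (t₁₂*t₂₁)*(τ₁₂*τ₂₁) := by
    rw [mixmul' c21_21, hτ5]
  -- scalar power facts
  have e2p : (q:ℂ)^(2:ℤ) = (q:ℂ)*(q:ℂ) := by
    rw [show (2:ℤ) = ((2:ℕ):ℤ) from by norm_num, zpow_natCast]; ring
  have e2m : (q:ℂ)^(-2:ℤ) = (q:ℂ)⁻¹*(q:ℂ)⁻¹ := by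
    rw [show (-2:ℤ) = -((2:ℕ):ℤ) from by norm_num, zpow_neg, zpow_natCast, sq, mul_inv]
  -- commutation relations in zpow-scalar form
  have hub2 : (t₂₁*τ₁₂)*(zst*ζ) = (q:ℂ)^(-2:ℤ)•((zst*ζ)*(t₂₁*τ₁₂)) := by
    rw [hub, hbu, smul_smul, e2m]
    congr 1
    field_simp
  have hva2 : (t₁₂*τ₂₁)*(z*ζst) = (q:ℂ)^(2:ℤ)•((z*ζst)*(t₁₂*τ₂₁)) := by
    rw [hva, hav, smul_smul, e2p]
    congr 1
    field_simp
  have hua2 : (t₂₁*τ₁₂)*(z*ζst) = (q:ℂ)^(2:ℤ)•((z*ζst)*(t₂₁*τ₁₂)) := by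
    rw [hua, hau, smul_smul, e2p]
    congr 1
    ring
  have haξ2 : (z*ζst)*ξ = (q:ℂ)^(-2:ℤ)•(ξ*(z*ζst)) := by
    rw [haξ, hξa, smul_smul, e2m]
    congr 1
    field_simp
  have hbξ2 : (zst*ζ)*ξ = (q:ℂ)^(2:ℤ)•(ξ*(zst*ζ)) := by
    rw [hbξ, hξb, smul_smul, e2p]
    congr 1
    field_simp
  have hxξ : x*ξ = ξ*x := by
    rw [hx, hξ, smul_mul_smul_comm, smul_mul_smul_comm, gl9]
  have huv2 : (t₂₁*τ₁₂)*(t₁₂*τ₂₁) = (q:ℂ)^(-2:ℤ)•(x*ξ) := by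
    rw [huv, hx, hξ, smul_mul_smul_comm, smul_smul, e2m,
      show ((q:ℂ)⁻¹*(q:ℂ)⁻¹)*(-(q:ℂ)*-(q:ℂ)) = 1 from by field_simp, one_smul]
  have hvuc : (t₁₂*τ₂₁)*(t₂₁*τ₁₂) = (t₂₁*τ₁₂)*(t₁₂*τ₂₁) := by rw [huv, hvu]
  -- factorization of the kernels
  have hk2f : k₂₂ = (q:ℂ)⁻¹•(((zst*ζ) - 1) * (t₂₁*τ₁₂)) := by
    rw [hk22, sub_mul, one_mul, hbu, smul_sub, smul_smul, inv_mul_cancel₀ hQ, one_smul,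
      neg_smul]
    abel
  have hk1f : k₁₁ = (q:ℂ)•(((z*ζst) - 1) * (t₁₂*τ₂₁)) := by
    rw [hk11, sub_mul, one_mul, hav, smul_sub, smul_smul, mul_inv_cancel₀ hQ, one_smul]
  -- powers of the kernels
  have H2 : ∀ n : ℕ, k₂₂^n =
      ((q:ℂ)^(-(n:ℤ))) • (Gf (q:ℂ) (zst*ζ) n (2-2*(n:ℤ)) * (t₂₁*τ₁₂)^n) := by
    intro n
    induction n with
    | zero => simp
    | succ n ih =>
      rw [pow_succ', ih, hk2f, smul_mul_smul_comm]
      rw [show (((zst*ζ)-1) * (t₂₁*τ₁₂)) * (Gf (q:ℂ) (zst*ζ) n (2-2*(n:ℤ)) * (t₂₁*τ₁₂)^n)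
          = ((zst*ζ)-1) * (((t₂₁*τ₁₂) * Gf (q:ℂ) (zst*ζ) n (2-2*(n:ℤ))) * (t₂₁*τ₁₂)^n)
        from by rw [mul_assoc, ← mul_assoc (t₂₁*τ₁₂)]]
      rw [mul_Gf hQ hub2 n _, mul_assoc _ (t₂₁*τ₁₂), ← pow_succ', ← mul_assoc]
      rw [show (2-2*(n:ℤ)) + (-2) = 2-2*((n+1:ℕ):ℤ) from by push_cast; ring]
      have hcons : ((zst*ζ) - 1) * Gf (q:ℂ) (zst*ζ) n (2-2*((n+1:ℕ):ℤ)) =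
          Gf (q:ℂ) (zst*ζ) (n+1) (2-2*((n+1:ℕ):ℤ)) := by
        rw [Gf_succ, show (2-2*((n+1:ℕ):ℤ)) + 2*(n:ℤ) = 0 from by push_cast; ring,
          zpow_zero, one_smul, ← Gf_comm1]
      rw [hcons]
      congr 1
      rw [← zpow_neg_one, ← zpow_add₀ hQ]
      congr 1
      push_cast; ring
  have H1 : ∀ n : ℕ, k₁₁^n =
      ((q:ℂ)^((n:ℤ))) • (Gf (q:ℂ) (z*ζst) n 0 * (t₁₂*τ₂₁)^n) := by
    intro n
    induction n with
    | zero => simp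
    | succ n ih =>
      rw [pow_succ', ih, hk1f, smul_mul_smul_comm]
      rw [show (((z*ζst)-1) * (t₁₂*τ₂₁)) * (Gf (q:ℂ) (z*ζst) n 0 * (t₁₂*τ₂₁)^n)
          = ((z*ζst)-1) * (((t₁₂*τ₂₁) * Gf (q:ℂ) (z*ζst) n 0) * (t₁₂*τ₂₁)^n)
        from by rw [mul_assoc, ← mul_assoc (t₁₂*τ₂₁)]]
      rw [mul_Gf hQ hva2 n _, mul_assoc _ (t₁₂*τ₂₁), ← pow_succ', ← mul_assoc]
      have hcons : ((z*ζst) - 1) * Gf (q:ℂ) (z*ζst) n (0 + 2) =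
          Gf (q:ℂ) (z*ζst) (n+1) 0 := by
        rw [Gf_cons, zpow_zero, one_smul]
      rw [hcons]
      congr 1
      rw [show (((n:ℕ)+1:ℕ):ℤ) = 1 + (n:ℤ) from by push_cast; ring, zpow_add₀ hQ, zpow_one]
  -- power versions of the commutation relations
  have ual : (t₂₁*τ₁₂)^l * (z*ζst) = (q:ℂ)^((2:ℤ)*(l:ℤ))•((z*ζst) * (t₂₁*τ₁₂)^l) := by
    have h := pow_swap hua2 l
    rwa [zpow_pow'] at h
  have aξl : (z*ζst) * ξ^l = (q:ℂ)^((-2:ℤ)*(l:ℤ))•(ξ^l * (z*ζst)) := by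
    have h := pow_swap' haξ2 l
    rwa [zpow_pow'] at h
  have bξl : (zst*ζ) * ξ^l = (q:ℂ)^((2:ℤ)*(l:ℤ))•(ξ^l * (zst*ζ)) := by
    have h := pow_swap' hbξ2 l
    rwa [zpow_pow'] at h
  have hCuv : Commute (t₂₁*τ₁₂) (t₁₂*τ₂₁) := hvuc.symm
  have hCxξ : Commute x ξ := hxξ
  have uvl : (t₂₁*τ₁₂)^l * (t₁₂*τ₂₁)^l = (q:ℂ)^((-2:ℤ)*(l:ℤ))•(ξ^l * x^l) := by
    rw [← hCuv.mul_pow, huv2, smul_pow, zpow_pow', hCxξ.mul_pow, (hCxξ.pow_pow l l).eq]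
  have main : k₂₂^l * k₁₁^l = ((q:ℂ)^(-(2*(l:ℤ)))) •
      (ξ^l * (Gf (q:ℂ) (zst*ζ) l 2 * (Gf (q:ℂ) (z*ζst) l 0 * x^l))) := by
    rw [H2 l, H1 l, smul_mul_smul_comm, ← zpow_add₀ hQ,
      show (-(l:ℤ)) + (l:ℤ) = 0 from by ring, zpow_zero, one_smul]
    calc Gf (q:ℂ) (zst*ζ) l (2-2*(l:ℤ)) * (t₂₁*τ₁₂)^l * (Gf (q:ℂ) (z*ζst) l 0 * (t₁₂*τ₂₁)^l)
        = Gf (q:ℂ) (zst*ζ) l (2-2*(l:ℤ)) * (((t₂₁*τ₁₂)^l * Gf (q:ℂ) (z*ζst) l 0) * (t₁₂*τ₂₁)^l) := by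
          rw [mul_assoc, ← mul_assoc ((t₂₁*τ₁₂)^l)]
      _ = Gf (q:ℂ) (zst*ζ) l (2-2*(l:ℤ)) * ((Gf (q:ℂ) (z*ζst) l (0+(2:ℤ)*(l:ℤ)) * (t₂₁*τ₁₂)^l) * (t₁₂*τ₂₁)^l) := by
          rw [mul_Gf hQ ual l 0]
      _ = Gf (q:ℂ) (zst*ζ) l (2-2*(l:ℤ)) * (Gf (q:ℂ) (z*ζst) l (0+(2:ℤ)*(l:ℤ)) * ((q:ℂ)^((-2:ℤ)*(l:ℤ))•(ξ^l * x^l))) := by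
          rw [mul_assoc, uvl]
      _ = (q:ℂ)^((-2:ℤ)*(l:ℤ)) • (Gf (q:ℂ) (zst*ζ) l (2-2*(l:ℤ)) * ((Gf (q:ℂ) (z*ζst) l (0+(2:ℤ)*(l:ℤ)) * ξ^l) * x^l)) := by
          rw [mul_smul_comm, mul_smul_comm, ← mul_assoc (Gf (q:ℂ) (z*ζst) l (0+(2:ℤ)*(l:ℤ)))]
      _ = (q:ℂ)^((-2:ℤ)*(l:ℤ)) • ((Gf (q:ℂ) (zst*ζ) l (2-2*(l:ℤ)) * ξ^l) * (Gf (q:ℂ) (z*ζst) l ((0+(2:ℤ)*(l:ℤ))+(-2:ℤ)*(l:ℤ)) * x^l)) := by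
          rw [Gf_mul hQ aξl l _, mul_assoc, ← mul_assoc (Gf (q:ℂ) (zst*ζ) l (2-2*(l:ℤ)))]
      _ = (q:ℂ)^(-(2*(l:ℤ))) • (ξ^l * (Gf (q:ℂ) (zst*ζ) l ((2-2*(l:ℤ))+(2:ℤ)*(l:ℤ)) * (Gf (q:ℂ) (z*ζst) l ((0+(2:ℤ)*(l:ℤ))+(-2:ℤ)*(l:ℤ)) * x^l))) := by
          rw [Gf_mul hQ bξl l _, mul_assoc,
            show ((-2:ℤ)*(l:ℤ)) = -(2*(l:ℤ)) from by ring]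
      _ = (q:ℂ)^(-(2*(l:ℤ))) • (ξ^l * (Gf (q:ℂ) (zst*ζ) l 2 * (Gf (q:ℂ) (z*ζst) l 0 * x^l))) := by
          rw [show (2-2*(l:ℤ))+(2:ℤ)*(l:ℤ) = 2 from by ring,
            show (0+(2:ℤ)*(l:ℤ))+(-2:ℤ)*(l:ℤ) = 0 from by ring]
  rw [main, Gf_sum2 hq0 hq1, Gf_sum0 hq0 hq1]
  congr 1
  simp only [smul_mul_assoc, mul_smul_comm, smul_smul]
  rw [show ((-1:ℂ))^l*(-1:ℂ)^l = 1 from by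
      rw [← pow_add, show l + l = 2*l from by ring, pow_mul]; norm_num,
    one_smul]
  simp only [ccoef, Ncoef, Dcoef, mul_assoc]
end
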